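/- arXiv:2408.09823 — 9 statements merged into one kernel-verified Lean document; each statement's English description precedes it below -/
import Mathlib

section
/- Let G be a locally finite simple C4-free graph, let x be a vertex contained in a triangle with deg(x) ≥ 3. Then the punctured 2-ball of x (the induced structure on vertices at distance 1 or 2 from x, with spherical edges within S1(x) and radial edges between S1(x) and S2(x)) is disconnected. -/
open Finset

variable {V : Type*}

/-- Unweighted non-normalized graph Laplacian. -/
noncomputable def nnLap (G : SimpleGraph V) [G.LocallyFinite] (f : V → ℝ) (x : V) : ℝ :=
  ∑ y ∈ G.neighborFinset x, (f y - f x)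

/-- Unweighted normalized graph Laplacian. -/
noncomputable def nLap (G : SimpleGraph V) [G.LocallyFinite] (f : V → ℝ) (x : V) : ℝ :=
  (∑ y ∈ G.neighborFinset x, (f y - f x)) / (G.degree x : ℝ)

/-- Bakry–Émery carré du champ operator Γ for a Laplacian `L`. -/
noncomputable def gam (L : (V → ℝ) → V → ℝ) (f g : V → ℝ) (x : V) : ℝ :=
  (L (f * g) x - f x * L g x - g x * L f x) / 2

/-- Iterated carré du champ operator Γ₂ for a Laplacian `L`. -/
noncomputable def gam2 (L : (V → ℝ) → V → ℝ) (f g : V → ℝ) (x : V) : ℝ :=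
  (L (gam L f g) x - gam L f (L g) x - gam L (L f) g x) / 2

/-- `G` has no 4-cycle subgraph, equivalently any two distinct vertices have at
most one common neighbor. -/
def C4Free (G : SimpleGraph V) : Prop :=
  ∀ ⦃u v a b : V⦄, u ≠ v → G.Adj u a → G.Adj a v → G.Adj u b → G.Adj b v → a = b

/-- The punctured 2-ball of `x`: the graph on `S₁(x) ∪ S₂(x)` with the spherical
edges inside `S₁(x)` and the radial edges between `S₁(x)` and `S₂(x)`. -/
def pBall (G : SimpleGraph V) (x : V) : SimpleGraph V where
  Adj u v := G.Adj u v ∧ ((G.dist x u = 1 ∧ G.dist x v = 1) ∨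
    (G.dist x u = 1 ∧ G.dist x v = 2) ∨ (G.dist x u = 2 ∧ G.dist x v = 1))
  symm := by
    constructor
    intro u v h
    refine ⟨h.1.symm, ?_⟩
    tauto
  loopless := ⟨fun u h => G.loopless.irrefl u h.1⟩

/-!
A triangle `x x₁ x₂` cuts the punctured 2-ball into pieces: by `C₄`-freeness the only neighbour
of `x₁` in `S₁(x)` is `x₂`, and a vertex of `S₂(x)` adjacent to `x₁` has no neighbour in `S₁(x)`
other than `x₁` (two such neighbours would be common neighbours of it and `x`). Hence `x₁`, `x₂`
and their neighbours in `S₂(x)` form a union of components, which misses a third neighbour of `x`.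
-/

namespace SimpleGraph

variable {G : SimpleGraph V}

lemma Reachable.mem_of_forall_adj {S : Set V} (hS : ∀ u ∈ S, ∀ v, G.Adj u v → v ∈ S)
    {u v : V} (h : G.Reachable u v) (hu : u ∈ S) : v ∈ S := by
  rw [reachable_iff_reflTransGen] at h
  induction h with
  | refl => exact hu
  | tail _ hbc ih => exact hS _ ih _ hbc

lemma exists_adj_ne_ne_of_three_le_degree [DecidableEq V] [G.LocallyFinite] {x : V}
    (hd : 3 ≤ G.degree x) (a b : V) : ∃ y, G.Adj x y ∧ y ≠ a ∧ y ≠ b := by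
  have hcard : #{a, b} < #(G.neighborFinset x) :=
    card_le_two.trans_lt (by rwa [card_neighborFinset_eq_degree])
  obtain ⟨y, hy, hyab⟩ := exists_mem_notMem_of_card_lt_card hcard
  simp only [mem_insert, mem_singleton, not_or] at hyab
  exact ⟨y, (mem_neighborFinset G x y).mp hy, hyab⟩

end SimpleGraph

open SimpleGraph

def radialStar (G : SimpleGraph V) (x a : V) : Set V :=
  insert a {v | G.dist x v = 2 ∧ G.Adj a v}

lemma C4Free.pBall_adj_of_mem_radialStar {G : SimpleGraph V} (hC4 : C4Free G) {x a b u v : V}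
    (hxa : G.Adj x a) (hxb : G.Adj x b) (hab : G.Adj a b) (hu : u ∈ radialStar G x a)
    (huv : (pBall G x).Adj u v) : v ∈ radialStar G x a ∨ v = b := by
  obtain ⟨huv, hdist⟩ := huv
  rcases hu with rfl | ⟨hu2, hau⟩
  · have hu1 : G.dist x u = 1 := dist_eq_one_iff_adj.mpr hxa
    rcases hdist with ⟨-, hv1⟩ | ⟨-, hv2⟩ | ⟨hu2, -⟩
    · exact Or.inr (hC4 hxa.ne (dist_eq_one_iff_adj.mp hv1) huv.symm hxb hab.symm)
    · exact Or.inl (Or.inr ⟨hv2, huv⟩)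
    · omega
  · have hxu : x ≠ u := by
      rintro rfl
      rw [dist_self] at hu2
      omega
    rcases hdist with ⟨hu1, -⟩ | ⟨hu1, -⟩ | ⟨-, hv1⟩
    · omega
    · omega
    · exact Or.inl (Or.inl (hC4 hxu (dist_eq_one_iff_adj.mp hv1) huv.symm hxa hau))

/-- If a vertex `x` of a locally finite `C₄`-free graph lies in a triangle and
`deg x ≥ 3`, then the punctured 2-ball of `x` is disconnected. -/
theorem stmt_2 (G : SimpleGraph V) [G.LocallyFinite] (hC4 : C4Free G)
    (x x1 x2 : V) (h1 : G.Adj x x1) (h2 : G.Adj x x2) (h12 : G.Adj x1 x2)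
    (hd : 3 ≤ G.degree x) :
    ∃ u v : V, (G.dist x u = 1 ∨ G.dist x u = 2) ∧
      (G.dist x v = 1 ∨ G.dist x v = 2) ∧ ¬ (pBall G x).Reachable u v := by
  classical
  obtain ⟨y, hxy, hy1, hy2⟩ := exists_adj_ne_ne_of_three_le_degree hd x1 x2
  have hclosed : ∀ u ∈ radialStar G x x1 ∪ radialStar G x x2, ∀ v, (pBall G x).Adj u v →
      v ∈ radialStar G x x1 ∪ radialStar G x x2 := by
    rintro u (hu | hu) v huv
    · rcases hC4.pBall_adj_of_mem_radialStar h1 h2 h12 hu huv with hv | rfl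
      exacts [Or.inl hv, Or.inr (Set.mem_insert _ _)]
    · rcases hC4.pBall_adj_of_mem_radialStar h2 h1 h12.symm hu huv with hv | rfl
      exacts [Or.inr hv, Or.inl (Set.mem_insert _ _)]
  refine ⟨x1, y, Or.inl (dist_eq_one_iff_adj.mpr h1), Or.inl (dist_eq_one_iff_adj.mpr hxy),
    fun hr => ?_⟩
  have hy_ne_two : G.dist x y ≠ 2 := by rw [dist_eq_one_iff_adj.mpr hxy]; omega
  rcases hr.mem_of_forall_adj hclosed (Or.inl (Set.mem_insert _ _)) with
    (rfl | ⟨hy, -⟩) | (rfl | ⟨hy, -⟩)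
  exacts [hy1 rfl, hy_ne_two hy, hy2 rfl, hy_ne_two hy]
end

section
/- In a simple C4-free graph G, if every edge incident to a vertex x lies in a triangle, then the degree of x is even. -/
/-! Every neighbour `y` of `x` has a common neighbour with `x`, and `C₄`-freeness makes it unique.
So the graph induced on the neighbourhood of `x` is a perfect matching, and a vertex set carrying
a perfect matching has even size. -/

open Finset

variable {V : Type*}

namespace C4Free

variable {G : SimpleGraph V}

theorem eq_of_common_neighbors (hC4 : C4Free G) {x y a b : V} (hxy : x ≠ y)
    (hxa : G.Adj x a) (hya : G.Adj y a) (hxb : G.Adj x b) (hyb : G.Adj y b) : a = b :=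
  hC4 hxy hxa hya.symm hxb hyb.symm

theorem isMatching_induce_neighborSet (hC4 : C4Free G) {x : V}
    (ht : ∀ y, G.Adj x y → ∃ z, G.Adj x z ∧ G.Adj y z) :
    ((⊤ : G.Subgraph).induce (G.neighborSet x)).IsMatching := by
  intro y hy
  obtain ⟨z, hxz, hyz⟩ := ht y hy
  refine ⟨z, ⟨hy, hxz, hyz⟩, ?_⟩
  rintro w ⟨-, hxw, hyw⟩
  exact hC4.eq_of_common_neighbors hy.ne hxw hyw hxz hyz

end C4Free

/-- In a `C₄`-free graph, if every edge incident to `x` lies in a triangle,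
then `deg x` is even. -/
theorem stmt_4 (G : SimpleGraph V) [G.LocallyFinite] (hC4 : C4Free G) (x : V)
    (ht : ∀ y, G.Adj x y → ∃ z, G.Adj x z ∧ G.Adj y z) :
    Even (G.degree x) := by
  have hM := hC4.isMatching_induce_neighborSet ht
  let : Fintype ((⊤ : G.Subgraph).induce (G.neighborSet x)).verts :=
    inferInstanceAs (Fintype (G.neighborSet x))
  simpa [SimpleGraph.degree, SimpleGraph.neighborFinset] using hM.even_card
end

section
/- In a simple C4-free graph G, if every edge incident to a vertex x lies in a triangle, then the subgraph induced on the neighborhood N(x) is a perfect matching (every vertex of N(x) is adjacent to exactly one other vertex of N(x)). -/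
open Finset

variable {V : Type*}

/-- In a `C₄`-free graph, if every edge incident to `x` lies in a triangle,
then the subgraph induced on `N(x)` is a perfect matching: every neighbor of
`x` is adjacent to exactly one other neighbor of `x`. -/
theorem stmt_5 (G : SimpleGraph V) (hC4 : C4Free G) (x : V)
    (ht : ∀ y, G.Adj x y → ∃ z, G.Adj x z ∧ G.Adj y z) :
    ∀ y, G.Adj x y → ∃! z, G.Adj x z ∧ G.Adj y z := by
  intro y hxy
  obtain ⟨z, hxz, hyz⟩ := ht y hxy
  refine ⟨z, ⟨hxz, hyz⟩, ?_⟩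
  intro z' ⟨hxz', hyz'⟩
  exact hC4 hxy.ne hxz' hyz'.symm hxz hyz.symm
end

section
/- For the unweighted normalized Laplacian Δf(x) = (1/d_x) Σ_{y∼x} (f(y)−f(x)) on a locally finite simple graph, the Bochner-type identity holds: Γ₂(f)(x) = (1/4) Σ_{y∼x, z∼y} (1/(d_x d_y)) |f(x) − 2f(y) + f(z)|² + (1/2)(Δf(x))² − (1/2) Σ_{y∼x} (1/d_x) |f(y) − f(x)|². -/
/-!
For the normalized Laplacian, `Γ(g, h)(x) = (1 / 2dₓ) ∑_{y∼x} (g y - g x)(h y - h x)` and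
`Γ₂(f) = ½ ΔΓ(f) - Γ(f, Δf)`. Writing `f x - 2 f y + f z = (f z - f y) - (f y - f x)`, the average
over `z ∼ y` of its square is `2Γ(f)(y) - 2(f y - f x)Δf(y) + (f y - f x)²`. Averaging this over
`y ∼ x` expresses both sides of the identity through the same four quantities: the averages of
`Γ(f)(y)` and of `(f y - f x)Δf(y)` over `y ∼ x`, `Γ(f)(x)` and `Δf(x)`.
-/

open Finset

variable {V : Type*}

lemma gam_comm (L : (V → ℝ) → V → ℝ) (f g : V → ℝ) (x : V) : gam L f g x = gam L g f x := by
  unfold gam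
  rw [mul_comm f g]
  ring

lemma gam2_self (L : (V → ℝ) → V → ℝ) (f : V → ℝ) (x : V) :
    gam2 L f f x = L (gam L f f) x / 2 - gam L f (L f) x := by
  unfold gam2
  rw [gam_comm L (L f) f]
  ring

section NormalizedLaplacian

variable (G : SimpleGraph V) [G.LocallyFinite]

lemma nLap_eq_sum_div_sub {x : V} (hx : (G.degree x : ℝ) ≠ 0) (u : V → ℝ) :
    nLap G u x = (∑ y ∈ G.neighborFinset x, u y) / G.degree x - u x := by
  rw [nLap, sum_sub_distrib, sum_const, G.card_neighborFinset_eq_degree, nsmul_eq_mul]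
  field_simp

lemma gam_nLap (g h : V → ℝ) (x : V) :
    gam (nLap G) g h x =
      (∑ y ∈ G.neighborFinset x, (g y - g x) * (h y - h x)) / (2 * G.degree x) := by
  have hprod : ∑ y ∈ G.neighborFinset x, ((g * h) y - (g * h) x)
      = ∑ y ∈ G.neighborFinset x, (g y - g x) * (h y - h x)
        + g x * ∑ y ∈ G.neighborFinset x, (h y - h x)
        + h x * ∑ y ∈ G.neighborFinset x, (g y - g x) := by
    rw [mul_sum, mul_sum, ← sum_add_distrib, ← sum_add_distrib]
    exact sum_congr rfl fun y _ => by simp only [Pi.mul_apply]; ring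
  unfold gam nLap
  rw [hprod]
  ring

lemma gam_nLap_eq_sum_sub {x : V} (hx : (G.degree x : ℝ) ≠ 0) (g h : V → ℝ) :
    gam (nLap G) g h x =
      (∑ y ∈ G.neighborFinset x, (g y - g x) * h y) / (2 * G.degree x) - nLap G g x * h x / 2 := by
  rw [gam_nLap, nLap]
  simp only [mul_sub, sum_sub_distrib, ← sum_mul]
  field_simp

lemma cast_degree_ne_zero_of_adj {x y : V} (h : G.Adj x y) : (G.degree y : ℝ) ≠ 0 := by
  have := (G.degree_pos_iff_exists_adj y).mpr ⟨x, h.symm⟩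
  positivity

lemma sum_sq_second_difference {y : V} (hy : (G.degree y : ℝ) ≠ 0) (f : V → ℝ) (a : ℝ) :
    (∑ z ∈ G.neighborFinset y, (a - 2 * f y + f z) ^ 2) / G.degree y
      = 2 * gam (nLap G) f f y - 2 * (f y - a) * nLap G f y + (f y - a) ^ 2 := by
  have hexpand : ∑ z ∈ G.neighborFinset y, (a - 2 * f y + f z) ^ 2
      = ∑ z ∈ G.neighborFinset y, (f z - f y) * (f z - f y)
        - 2 * (f y - a) * ∑ z ∈ G.neighborFinset y, (f z - f y)
        + G.degree y * (f y - a) ^ 2 := by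
    rw [mul_sum, ← sum_sub_distrib, ← G.card_neighborFinset_eq_degree, ← nsmul_eq_mul,
      ← sum_const, ← sum_add_distrib]
    exact sum_congr rfl fun z _ => by ring
  rw [hexpand, gam_nLap, nLap]
  field_simp

end NormalizedLaplacian

theorem stmt_6_general (G : SimpleGraph V) [G.LocallyFinite]
    (f : V → ℝ) (x : V) :
    gam2 (nLap G) f f x =
      (1 / 4) * ∑ y ∈ G.neighborFinset x, ∑ z ∈ G.neighborFinset y,
          (1 / ((G.degree x : ℝ) * (G.degree y : ℝ))) * (f x - 2 * f y + f z) ^ 2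
      + (1 / 2) * (nLap G f x) ^ 2
      - (1 / 2) * ∑ y ∈ G.neighborFinset x,
          (1 / (G.degree x : ℝ)) * (f y - f x) ^ 2 := by
  rcases eq_or_ne (G.degree x : ℝ) 0 with hx | hx
  · have hempty : G.neighborFinset x = ∅ := by
      rw [← card_eq_zero, G.card_neighborFinset_eq_degree]
      exact_mod_cast hx
    simp [gam2, gam, nLap, hempty]
  have hsecond : ∀ y ∈ G.neighborFinset x,
      ∑ z ∈ G.neighborFinset y, 1 / ((G.degree x : ℝ) * G.degree y) * (f x - 2 * f y + f z) ^ 2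
        = (2 * gam (nLap G) f f y - 2 * (f y - f x) * nLap G f y + (f y - f x) ^ 2)
          / G.degree x := by
    intro y hy
    have hy := cast_degree_ne_zero_of_adj G ((G.mem_neighborFinset x y).mp hy)
    rw [← sum_sq_second_difference G hy, ← mul_sum]
    field_simp
  rw [sum_congr rfl hsecond, gam2_self, nLap_eq_sum_div_sub G hx, gam_nLap,
    gam_nLap_eq_sum_sub G hx]
  simp only [← sum_div, sum_add_distrib, sum_sub_distrib, ← mul_sum, mul_assoc, ← sq]
  field_simp
  ring

/-- Bochner-type identity for the unweighted normalized Laplacian. -/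
theorem stmt_6 (G : SimpleGraph V) [G.LocallyFinite]
    (hd : ∀ v : V, 0 < G.degree v) (f : V → ℝ) (x : V) :
    gam2 (nLap G) f f x =
      (1 / 4) * ∑ y ∈ G.neighborFinset x, ∑ z ∈ G.neighborFinset y,
          (1 / ((G.degree x : ℝ) * (G.degree y : ℝ))) * (f x - 2 * f y + f z) ^ 2
      + (1 / 2) * (nLap G f x) ^ 2
      - (1 / 2) * ∑ y ∈ G.neighborFinset x,
          (1 / (G.degree x : ℝ)) * (f y - f x) ^ 2 :=
  stmt_6_general G f x
end

section
/- For the unweighted non-normalized Laplacian Δf(x) = Σ_{y∼x}(f(y)−f(x)) on a locally finite simple graph, the Bochner-type identity holds: Γ₂(f)(x) = (1/4) Σ_{y∼x, z∼y} |f(x) − 2f(y) + f(z)|² + (1/2)(Δf(x))² − (1/4) Σ_{y∼x} (d_x + d_y) |f(y) − f(x)|². -/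
open Finset

variable {V : Type*}

lemma gam_nnLap (G : SimpleGraph V) [G.LocallyFinite] (f g : V → ℝ) (x : V) :
    gam (nnLap G) f g x =
      (∑ y ∈ G.neighborFinset x, (f y - f x) * (g y - g x)) / 2 := by
  unfold gam nnLap
  congr 1
  simp only [Pi.mul_apply, Finset.mul_sum]
  rw [← Finset.sum_sub_distrib, ← Finset.sum_sub_distrib]
  exact Finset.sum_congr rfl fun y _ => by ring

/-- Bochner-type identity for the unweighted non-normalized Laplacian. -/
theorem stmt_7 (G : SimpleGraph V) [G.LocallyFinite] (f : V → ℝ) (x : V) :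
    gam2 (nnLap G) f f x =
      (1 / 4) * ∑ y ∈ G.neighborFinset x, ∑ z ∈ G.neighborFinset y,
          (f x - 2 * f y + f z) ^ 2
      + (1 / 2) * (nnLap G f x) ^ 2
      - (1 / 4) * ∑ y ∈ G.neighborFinset x,
          ((G.degree x : ℝ) + (G.degree y : ℝ)) * (f y - f x) ^ 2 := by
  have hg : ∀ z, gam (nnLap G) f f z =
      (∑ y ∈ G.neighborFinset z, (f y - f z) ^ 2) / 2 := by
    intro z
    rw [gam_nnLap]
    congr 1
    exact Finset.sum_congr rfl fun y _ => by ring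
  have h1 : nnLap G (gam (nnLap G) f f) x
      = ∑ y ∈ G.neighborFinset x, ((∑ z ∈ G.neighborFinset y, (f z - f y) ^ 2) / 2
          - (∑ z ∈ G.neighborFinset x, (f z - f x) ^ 2) / 2) := by
    have : nnLap G (gam (nnLap G) f f) x
        = ∑ y ∈ G.neighborFinset x,
            (gam (nnLap G) f f y - gam (nnLap G) f f x) := rfl
    rw [this]
    exact Finset.sum_congr rfl fun y _ => by rw [hg, hg]
  have h2 : gam (nnLap G) f (nnLap G f) x
      = (∑ y ∈ G.neighborFinset x, (f y - f x) * nnLap G f y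
          - (∑ y ∈ G.neighborFinset x, (f y - f x)) * nnLap G f x) / 2 := by
    rw [gam_nnLap]
    congr 1
    rw [Finset.sum_mul, ← Finset.sum_sub_distrib]
    exact Finset.sum_congr rfl fun y _ => by ring
  have h3 : gam (nnLap G) (nnLap G f) f x = gam (nnLap G) f (nnLap G f) x := by
    rw [gam_nnLap, gam_nnLap]
    congr 1
    exact Finset.sum_congr rfl fun y _ => by ring
  have h4 : ∀ y, ∑ z ∈ G.neighborFinset y, (f x - 2 * f y + f z) ^ 2
      = ∑ z ∈ G.neighborFinset y, (f z - f y) ^ 2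
        - 2 * ((f y - f x) * nnLap G f y)
        + (G.degree y : ℝ) * (f y - f x) ^ 2 := by
    intro y
    have e : ∀ z ∈ G.neighborFinset y, (f x - 2 * f y + f z) ^ 2
        = (f z - f y) ^ 2 - 2 * ((f y - f x) * (f z - f y)) + (f y - f x) ^ 2 :=
      fun z _ => by ring
    rw [Finset.sum_congr rfl e, Finset.sum_add_distrib, Finset.sum_sub_distrib,
      Finset.sum_const, SimpleGraph.card_neighborFinset_eq_degree, nsmul_eq_mul,
      ← Finset.mul_sum, ← Finset.mul_sum]
    rfl
  have hL1 : ∑ y ∈ G.neighborFinset x,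
        ((∑ z ∈ G.neighborFinset y, (f z - f y) ^ 2) / 2
          - (∑ z ∈ G.neighborFinset x, (f z - f x) ^ 2) / 2)
      = (∑ y ∈ G.neighborFinset x, ∑ z ∈ G.neighborFinset y, (f z - f y) ^ 2) / 2
        - (G.degree x : ℝ) * ((∑ z ∈ G.neighborFinset x, (f z - f x) ^ 2) / 2) := by
    rw [Finset.sum_sub_distrib, Finset.sum_const,
      SimpleGraph.card_neighborFinset_eq_degree, nsmul_eq_mul, Finset.sum_div, Finset.sum_div]
  have hR1 : ∑ y ∈ G.neighborFinset x,
        (∑ z ∈ G.neighborFinset y, (f z - f y) ^ 2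
          - 2 * ((f y - f x) * nnLap G f y)
          + (G.degree y : ℝ) * (f y - f x) ^ 2)
      = (∑ y ∈ G.neighborFinset x, ∑ z ∈ G.neighborFinset y, (f z - f y) ^ 2)
        - 2 * (∑ y ∈ G.neighborFinset x, (f y - f x) * nnLap G f y)
        + ∑ y ∈ G.neighborFinset x, (G.degree y : ℝ) * (f y - f x) ^ 2 := by
    rw [Finset.sum_add_distrib, Finset.sum_sub_distrib, ← Finset.mul_sum]
  have hR2 : ∑ y ∈ G.neighborFinset x,
        ((G.degree x : ℝ) + (G.degree y : ℝ)) * (f y - f x) ^ 2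
      = (G.degree x : ℝ) * (∑ y ∈ G.neighborFinset x, (f y - f x) ^ 2)
        + ∑ y ∈ G.neighborFinset x, (G.degree y : ℝ) * (f y - f x) ^ 2 := by
    rw [Finset.mul_sum, ← Finset.sum_add_distrib]
    exact Finset.sum_congr rfl fun y _ => by ring
  have hP : nnLap G f x = ∑ y ∈ G.neighborFinset x, (f y - f x) := rfl
  unfold gam2
  rw [h1, h3, h2, Finset.sum_congr rfl fun y _ => h4 y, hL1, hR1, hR2, hP]
  ring
end

section
/- The graph C3' (a triangle with one pendant edge attached to one of its vertices, i.e., 4 vertices a,b,c,d with edges ab, bc, ca, ad) with the unweighted non-normalized Laplacian satisfies CD(0,∞): for every vertex x and every function f, Γ₂(f)(x) ≥ 0. -/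
open Finset

variable {V : Type*}

/-- The triangle with one pendant edge: vertices `a=0,b=1,c=2,d=3`, edges
`ab, bc, ca, ad`. -/
def C3' : SimpleGraph (Fin 4) :=
  SimpleGraph.fromRel
    (fun u v => (u = 0 ∧ v = 1) ∨ (u = 1 ∧ v = 2) ∨ (u = 0 ∧ v = 2) ∨ (u = 0 ∧ v = 3))

noncomputable instance : C3'.LocallyFinite := fun _ => Fintype.ofFinite _

/-!
Γ₂(f)(x) is a quadratic form in `f` that vanishes on constants, so it can be diagonalised in the
differences of `f`: at every vertex of C₃' it is a sum of squares of first and second differences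
with positive coefficients, found by completing squares in its Gram matrix.
-/

lemma C3'_neighborFinset_zero : C3'.neighborFinset 0 = {1, 2, 3} := by
  ext y; rw [SimpleGraph.mem_neighborFinset]; simp only [C3', SimpleGraph.fromRel_adj]
  fin_cases y <;> decide

lemma C3'_neighborFinset_one : C3'.neighborFinset 1 = {0, 2} := by
  ext y; rw [SimpleGraph.mem_neighborFinset]; simp only [C3', SimpleGraph.fromRel_adj]
  fin_cases y <;> decide

lemma C3'_neighborFinset_two : C3'.neighborFinset 2 = {0, 1} := by
  ext y; rw [SimpleGraph.mem_neighborFinset]; simp only [C3', SimpleGraph.fromRel_adj]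
  fin_cases y <;> decide

lemma C3'_neighborFinset_three : C3'.neighborFinset 3 = {0} := by
  ext y; rw [SimpleGraph.mem_neighborFinset]; simp only [C3', SimpleGraph.fromRel_adj]
  fin_cases y <;> decide

section Laplacian

variable (g : Fin 4 → ℝ)

lemma nnLap_C3'_zero : nnLap C3' g 0 = (g 1 - g 0) + (g 2 - g 0) + (g 3 - g 0) := by
  rw [nnLap, C3'_neighborFinset_zero, sum_insert (by decide), sum_pair (by decide), add_assoc]

lemma nnLap_C3'_one : nnLap C3' g 1 = (g 0 - g 1) + (g 2 - g 1) := by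
  rw [nnLap, C3'_neighborFinset_one, sum_pair (by decide)]

lemma nnLap_C3'_two : nnLap C3' g 2 = (g 0 - g 2) + (g 1 - g 2) := by
  rw [nnLap, C3'_neighborFinset_two, sum_pair (by decide)]

lemma nnLap_C3'_three : nnLap C3' g 3 = g 0 - g 3 := by
  rw [nnLap, C3'_neighborFinset_three, sum_singleton]

end Laplacian

section SumOfSquares

variable (f : Fin 4 → ℝ)

lemma gam2_nnLap_C3'_zero :
    gam2 (nnLap C3') f f 0 = (f 1 + f 2 + f 3 - 3 * f 0) ^ 2 / 2 + (f 1 - f 2) ^ 2 := by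
  simp only [gam2, gam, nnLap_C3'_zero, nnLap_C3'_one, nnLap_C3'_two, nnLap_C3'_three,
    Pi.mul_apply]
  ring

lemma gam2_nnLap_C3'_one :
    gam2 (nnLap C3') f f 1 =
      (f 1 - 2 * f 0 + f 3) ^ 2 / 4 + (f 0 - f 2) ^ 2 / 2 + (f 0 - f 1) ^ 2
        + 5 / 4 * (f 2 - f 1) ^ 2 := by
  simp only [gam2, gam, nnLap_C3'_zero, nnLap_C3'_one, nnLap_C3'_two, Pi.mul_apply]
  ring

lemma gam2_nnLap_C3'_two :
    gam2 (nnLap C3') f f 2 =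
      (f 2 - 2 * f 0 + f 3) ^ 2 / 4 + (f 0 - f 1) ^ 2 / 2 + (f 0 - f 2) ^ 2
        + 5 / 4 * (f 1 - f 2) ^ 2 := by
  simp only [gam2, gam, nnLap_C3'_zero, nnLap_C3'_one, nnLap_C3'_two, Pi.mul_apply]
  ring

lemma gam2_nnLap_C3'_three :
    gam2 (nnLap C3') f f 3 =
      (f 0 - f 3) ^ 2 / 2 + (f 1 - 2 * f 0 + f 3) ^ 2 / 4 + (f 2 - 2 * f 0 + f 3) ^ 2 / 4 := by
  simp only [gam2, gam, nnLap_C3'_zero, nnLap_C3'_three, Pi.mul_apply]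
  ring

end SumOfSquares

/-- The graph `C₃'` (triangle with one pendant edge) with the unweighted
non-normalized Laplacian satisfies `CD(0,∞)`. -/
theorem stmt_11 (x : Fin 4) (f : Fin 4 → ℝ) :
    0 ≤ gam2 (nnLap C3') f f x := by
  fin_cases x
  · rw [Fin.zero_eta, gam2_nnLap_C3'_zero]; positivity
  · rw [Fin.mk_one, gam2_nnLap_C3'_one]; positivity
  · rw [show (⟨2, _⟩ : Fin 4) = 2 from rfl, gam2_nnLap_C3'_two]; positivity
  · rw [show (⟨3, _⟩ : Fin 4) = 3 from rfl, gam2_nnLap_C3'_three]; positivity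
end

section
/- Let G be a locally finite simple C4-free graph with the unweighted non-normalized Laplacian satisfying CD(0,∞), and suppose some vertex of G lies in a triangle and G is connected. Then G is isomorphic to C3 or to C3' (the triangle with one pendant edge). -/
open Finset

variable {V : Type*}

lemma nnLap_eval {G : SimpleGraph V} [G.LocallyFinite] {h : V → ℝ} {x : V}
    {t : Finset V} (hsub : t ⊆ G.neighborFinset x)
    (hout : ∀ y, G.Adj x y → y ∉ t → h y = h x) :
    nnLap G h x = ∑ y ∈ t, (h y - h x) := by
  refine (Finset.sum_subset hsub ?_).symm
  intro y hy hyt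
  rw [hout y ((SimpleGraph.mem_neighborFinset G x y).mp hy) hyt, sub_self]

lemma nnLap_eval' {G : SimpleGraph V} [G.LocallyFinite] {h : V → ℝ} {x : V}
    {t : Finset V} (hsub : t ⊆ G.neighborFinset x)
    (hout : ∀ y, G.Adj x y → y ∉ t → h y = 0) :
    nnLap G h x = (∑ y ∈ t, h y) - (G.degree x : ℝ) * h x := by
  unfold nnLap
  rw [Finset.sum_sub_distrib, Finset.sum_const]
  rw [← Finset.sum_subset hsub (fun y hy hyt => hout y ((SimpleGraph.mem_neighborFinset G x y).mp hy) hyt)]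
  rw [SimpleGraph.card_neighborFinset_eq_degree, nsmul_eq_mul]

lemma walk_closure {G : SimpleGraph V} {S : Set V}
    (hS : ∀ x ∈ S, ∀ y, G.Adj x y → y ∈ S) {u v : V} (p : G.Walk u v) :
    v ∈ S → u ∈ S := by
  induction p with
  | nil => exact id
  | cons h _ ih => exact fun hv => hS _ (ih hv) _ h.symm

lemma key1core {G : SimpleGraph V} [G.LocallyFinite] (hC4 : C4Free G)
    (hCD : ∀ (x : V) (f : V → ℝ), 0 ≤ gam2 (nnLap G) f f x)
    {a b c w1 w2 : V} (hab : G.Adj a b) (hbc : G.Adj b c) (hac : G.Adj a c)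
    (hw1 : G.Adj a w1) (hw2 : G.Adj a w2)
    (h1b : w1 ≠ b) (h1c : w1 ≠ c) (h2b : w2 ≠ b) (h2c : w2 ≠ c) (h12 : w1 ≠ w2)
    (hz : ∀ z, G.Adj a z → z ≠ b → z ≠ c → z ≠ w1 → z ≠ w2 →
      ¬G.Adj z w1 ∧ ¬G.Adj z w2) : False := by
  classical
  have hn1b : ¬ G.Adj w1 b := fun h => (Ne.symm h1c) (hC4 hab.ne hac hbc.symm hw1 h)
  have hn1c : ¬ G.Adj w1 c := fun h => (Ne.symm h1b) (hC4 hac.ne hab hbc hw1 h)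
  have hn2b : ¬ G.Adj w2 b := fun h => (Ne.symm h2c) (hC4 hab.ne hac hbc.symm hw2 h)
  have hn2c : ¬ G.Adj w2 c := fun h => (Ne.symm h2b) (hC4 hac.ne hab hbc hw2 h)
  set f : V → ℝ := fun x =>
    if x = a then 0
    else if x = b ∨ x = c ∨ G.Adj x b ∨ G.Adj x c then 1
    else if x = w1 ∨ x = w2 ∨ G.Adj x w1 ∨ G.Adj x w2 then -1 else 0 with hf
  have hfa : f a = 0 := by simp [hf]
  have hfb : f b = 1 := by simp [hf, hab.ne']
  have hfc : f c = 1 := by simp [hf, hac.ne']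
  have hfw1 : f w1 = -1 := by simp [hf, hw1.ne', h1b, h1c, hn1b, hn1c]
  have hfw2 : f w2 = -1 := by simp [hf, hw2.ne', h2b, h2c, hn2b, hn2c]
  have hfb' : ∀ y, G.Adj b y → y ≠ a → f y = 1 := by
    intro y hy hya
    simp [hf, hya, hy.symm]
  have hfc' : ∀ y, G.Adj c y → y ≠ a → f y = 1 := by
    intro y hy hya
    simp [hf, hya, hy.symm]
  have hfw1' : ∀ y, G.Adj w1 y → y ≠ a → f y = -1 := by
    intro y hy hya
    have hyb : y ≠ b := by rintro rfl; exact hn1b hy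
    have hyc : y ≠ c := by rintro rfl; exact hn1c hy
    have hyb' : ¬ G.Adj y b := fun h => (Ne.symm hya) (hC4 h1b hw1.symm hab hy h)
    have hyc' : ¬ G.Adj y c := fun h => (Ne.symm hya) (hC4 h1c hw1.symm hac hy h)
    simp [hf, hya, hyb, hyc, hyb', hyc', hy.symm]
  have hfw2' : ∀ y, G.Adj w2 y → y ≠ a → f y = -1 := by
    intro y hy hya
    have hyb : y ≠ b := by rintro rfl; exact hn2b hy
    have hyc : y ≠ c := by rintro rfl; exact hn2c hy
    have hyb' : ¬ G.Adj y b := fun h => (Ne.symm hya) (hC4 h2b hw2.symm hab hy h)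
    have hyc' : ¬ G.Adj y c := fun h => (Ne.symm hya) (hC4 h2c hw2.symm hac hy h)
    simp [hf, hya, hyb, hyc, hyb', hyc', hy.symm]
  have hfz : ∀ z, G.Adj a z → z ≠ b → z ≠ c → z ≠ w1 → z ≠ w2 → f z = 0 := by
    intro z haz hzb hzc hz1 hz2
    obtain ⟨hzw1, hzw2⟩ := hz z haz hzb hzc hz1 hz2
    have hzb' : ¬ G.Adj z b := fun h => (Ne.symm hzc) (hC4 hab.ne hac hbc.symm haz h)
    have hzc' : ¬ G.Adj z c := fun h => (Ne.symm hzb) (hC4 hac.ne hab hbc haz h)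
    simp [hf, haz.ne', hzb, hzc, hzb', hzc', hz1, hz2, hzw1, hzw2]
  have hfz2 : ∀ z, G.Adj a z → z ≠ b → z ≠ c → z ≠ w1 → z ≠ w2 →
      ∀ y, G.Adj z y → y ≠ a → f y = 0 := by
    intro z haz hzb hzc hz1 hz2 y hy hya
    obtain ⟨hzw1, hzw2⟩ := hz z haz hzb hzc hz1 hz2
    have hzb' : ¬ G.Adj z b := fun h => (Ne.symm hzc) (hC4 hab.ne hac hbc.symm haz h)
    have hzc' : ¬ G.Adj z c := fun h => (Ne.symm hzb) (hC4 hac.ne hab hbc haz h)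
    have hyb : y ≠ b := by rintro rfl; exact hzb' hy
    have hyc : y ≠ c := by rintro rfl; exact hzc' hy
    have hy1 : y ≠ w1 := by rintro rfl; exact hzw1 hy
    have hy2 : y ≠ w2 := by rintro rfl; exact hzw2 hy
    have hyb' : ¬ G.Adj y b := fun h => (Ne.symm hya) (hC4 (Ne.symm hzb) hab.symm haz h.symm hy.symm)
    have hyc' : ¬ G.Adj y c := fun h => (Ne.symm hya) (hC4 (Ne.symm hzc) hac.symm haz h.symm hy.symm)
    have hy1' : ¬ G.Adj y w1 := fun h => hya (hC4 hz1 hy h haz.symm hw1)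
    have hy2' : ¬ G.Adj y w2 := fun h => hya (hC4 hz2 hy h haz.symm hw2)
    simp [hf, hya, hyb, hyc, hy1, hy2, hyb', hyc', hy1', hy2']
  -- finset facts
  have hT4 : ∀ g : V → ℝ, ∑ y ∈ ({b, c, w1, w2} : Finset V), g y = g b + g c + g w1 + g w2 := by
    intro g
    rw [Finset.sum_insert (by simp [hbc.ne, Ne.symm h1b, Ne.symm h2b]),
      Finset.sum_insert (by simp [Ne.symm h1c, Ne.symm h2c]),
      Finset.sum_insert (by simp [h12]), Finset.sum_singleton]
    ring
  have hsubA : ({b, c, w1, w2} : Finset V) ⊆ G.neighborFinset a := by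
    intro y hy
    rw [SimpleGraph.mem_neighborFinset]
    simp only [Finset.mem_insert, Finset.mem_singleton] at hy
    rcases hy with rfl | rfl | rfl | rfl
    exacts [hab, hac, hw1, hw2]
  have hmemsplit : ∀ y : V, y ∉ ({b, c, w1, w2} : Finset V) →
      y ≠ b ∧ y ≠ c ∧ y ≠ w1 ∧ y ≠ w2 := by
    intro y hy
    simp only [Finset.mem_insert, Finset.mem_singleton, not_or] at hy
    exact ⟨hy.1, hy.2.1, hy.2.2.1, hy.2.2.2⟩
  have hmul : ∀ (g h : V → ℝ) (y : V), (g * h) y = g y * h y := fun _ _ _ => rfl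
  have hsubB : ({a, c} : Finset V) ⊆ G.neighborFinset b := by
    intro y hy
    rw [SimpleGraph.mem_neighborFinset]
    simp only [Finset.mem_insert, Finset.mem_singleton] at hy
    rcases hy with rfl | rfl
    exacts [hab.symm, hbc]
  have houtB : ∀ y, G.Adj b y → y ∉ ({a, c} : Finset V) → f y = f b := by
    intro y hy hyt
    simp only [Finset.mem_insert, Finset.mem_singleton, not_or] at hyt
    rw [hfb]; exact hfb' y hy hyt.1
  have hsubC : ({a, b} : Finset V) ⊆ G.neighborFinset c := by
    intro y hy
    rw [SimpleGraph.mem_neighborFinset]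
    simp only [Finset.mem_insert, Finset.mem_singleton] at hy
    rcases hy with rfl | rfl
    exacts [hac.symm, hbc.symm]
  have houtC : ∀ y, G.Adj c y → y ∉ ({a, b} : Finset V) → f y = f c := by
    intro y hy hyt
    simp only [Finset.mem_insert, Finset.mem_singleton, not_or] at hyt
    rw [hfc]; exact hfc' y hy hyt.1
  have hsubW1 : ({a} : Finset V) ⊆ G.neighborFinset w1 := by
    intro y hy
    rw [SimpleGraph.mem_neighborFinset]
    simp only [Finset.mem_singleton] at hy
    subst hy; exact hw1.symm
  have houtW1 : ∀ y, G.Adj w1 y → y ∉ ({a} : Finset V) → f y = f w1 := by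
    intro y hy hyt
    simp only [Finset.mem_singleton] at hyt
    rw [hfw1]; exact hfw1' y hy hyt
  have hsubW2 : ({a} : Finset V) ⊆ G.neighborFinset w2 := by
    intro y hy
    rw [SimpleGraph.mem_neighborFinset]
    simp only [Finset.mem_singleton] at hy
    subst hy; exact hw2.symm
  have houtW2 : ∀ y, G.Adj w2 y → y ∉ ({a} : Finset V) → f y = f w2 := by
    intro y hy hyt
    simp only [Finset.mem_singleton] at hyt
    rw [hfw2]; exact hfw2' y hy hyt
  -- Laplacian values
  have hLfa : nnLap G f a = 0 := by
    rw [nnLap_eval' hsubA (fun y hy hyt => by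
      obtain ⟨h1, h2, h3, h4⟩ := hmemsplit y hyt; exact hfz y hy h1 h2 h3 h4), hT4]
    rw [hfa, hfb, hfc, hfw1, hfw2]; norm_num
  have hLfb : nnLap G f b = -1 := by
    rw [nnLap_eval hsubB houtB, Finset.sum_pair hac.ne]
    rw [hfa, hfb, hfc]; norm_num
  have hLfc : nnLap G f c = -1 := by
    rw [nnLap_eval hsubC houtC, Finset.sum_pair hab.ne]
    rw [hfa, hfb, hfc]; norm_num
  have hLfw1 : nnLap G f w1 = 1 := by
    rw [nnLap_eval hsubW1 houtW1, Finset.sum_singleton]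
    rw [hfa, hfw1]; norm_num
  have hLfw2 : nnLap G f w2 = 1 := by
    rw [nnLap_eval hsubW2 houtW2, Finset.sum_singleton]
    rw [hfa, hfw2]; norm_num
  have hL2a : nnLap G (f * f) a = 4 := by
    rw [nnLap_eval' hsubA (fun y hy hyt => by
      obtain ⟨h1, h2, h3, h4⟩ := hmemsplit y hyt
      simp [hmul, hfz y hy h1 h2 h3 h4]), hT4]
    simp only [hmul]
    rw [hfa, hfb, hfc, hfw1, hfw2]; norm_num
  have hL2b : nnLap G (f * f) b = -1 := by
    rw [nnLap_eval hsubB (fun y hy hyt => by simp only [hmul, houtB y hy hyt]),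
      Finset.sum_pair hac.ne]
    simp only [hmul]
    rw [hfa, hfb, hfc]; norm_num
  have hL2c : nnLap G (f * f) c = -1 := by
    rw [nnLap_eval hsubC (fun y hy hyt => by simp only [hmul, houtC y hy hyt]),
      Finset.sum_pair hab.ne]
    simp only [hmul]
    rw [hfa, hfb, hfc]; norm_num
  have hL2w1 : nnLap G (f * f) w1 = -1 := by
    rw [nnLap_eval hsubW1 (fun y hy hyt => by simp only [hmul, houtW1 y hy hyt]),
      Finset.sum_singleton]
    simp only [hmul]
    rw [hfa, hfw1]; norm_num
  have hL2w2 : nnLap G (f * f) w2 = -1 := by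
    rw [nnLap_eval hsubW2 (fun y hy hyt => by simp only [hmul, houtW2 y hy hyt]),
      Finset.sum_singleton]
    simp only [hmul]
    rw [hfa, hfw2]; norm_num
  -- gamma values
  have hGa : gam (nnLap G) f f a = 2 := by
    unfold gam; rw [hL2a, hLfa, hfa]; norm_num
  have hGb : gam (nnLap G) f f b = 1/2 := by
    unfold gam; rw [hL2b, hLfb, hfb]; norm_num
  have hGc : gam (nnLap G) f f c = 1/2 := by
    unfold gam; rw [hL2c, hLfc, hfc]; norm_num
  have hGw1 : gam (nnLap G) f f w1 = 1/2 := by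
    unfold gam; rw [hL2w1, hLfw1, hfw1]; norm_num
  have hGw2 : gam (nnLap G) f f w2 = 1/2 := by
    unfold gam; rw [hL2w2, hLfw2, hfw2]; norm_num
  have hGz : ∀ z, G.Adj a z → z ∉ ({b, c, w1, w2} : Finset V) →
      gam (nnLap G) f f z = 0 := by
    intro z haz hyt
    obtain ⟨h1, h2, h3, h4⟩ := hmemsplit z hyt
    have hfz0 := hfz z haz h1 h2 h3 h4
    have hL2z : nnLap G (f * f) z = 0 := by
      rw [nnLap_eval (t := (∅ : Finset V)) (Finset.empty_subset _) (fun y hy _ => by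
        by_cases hya : y = a
        · subst hya; simp [hmul, hfa, hfz0]
        · simp [hmul, hfz2 z haz h1 h2 h3 h4 y hy hya, hfz0]),
        Finset.sum_empty]
    unfold gam
    rw [hL2z, hfz0]; norm_num
  have hLG : nnLap G (gam (nnLap G) f f) a = 2 - (G.degree a : ℝ) * 2 := by
    rw [nnLap_eval' hsubA hGz, hT4]
    rw [hGa, hGb, hGc, hGw1, hGw2]; norm_num
  have hgfL : gam (nnLap G) f (nnLap G f) a = -2 := by
    unfold gam
    rw [nnLap_eval' hsubA (fun y hy hyt => by
      obtain ⟨h1, h2, h3, h4⟩ := hmemsplit y hyt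
      simp [hmul, hfz y hy h1 h2 h3 h4]), hT4]
    simp only [hmul]
    rw [hfa, hfb, hfc, hfw1, hfw2, hLfa, hLfb, hLfc, hLfw1, hLfw2]; norm_num
  have hgLf : gam (nnLap G) (nnLap G f) f a = -2 := by
    unfold gam
    rw [nnLap_eval' hsubA (fun y hy hyt => by
      obtain ⟨h1, h2, h3, h4⟩ := hmemsplit y hyt
      simp [hmul, hfz y hy h1 h2 h3 h4]), hT4]
    simp only [hmul]
    rw [hfa, hfb, hfc, hfw1, hfw2, hLfa, hLfb, hLfc, hLfw1, hLfw2]; norm_num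
  have hd4 : (4 : ℝ) ≤ (G.degree a : ℝ) := by
    have hcard : ({b, c, w1, w2} : Finset V).card = 4 := by
      rw [Finset.card_insert_of_notMem (by simp [hbc.ne, Ne.symm h1b, Ne.symm h2b]),
        Finset.card_insert_of_notMem (by simp [Ne.symm h1c, Ne.symm h2c]),
        Finset.card_insert_of_notMem (by simp [h12]), Finset.card_singleton]
    have := Finset.card_le_card hsubA
    rw [hcard, SimpleGraph.card_neighborFinset_eq_degree] at this
    exact_mod_cast this
  have h0 := hCD a f
  unfold gam2 at h0
  rw [hLG, hgfL, hgLf] at h0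
  linarith

lemma key1 {G : SimpleGraph V} [G.LocallyFinite] (hC4 : C4Free G)
    (hCD : ∀ (x : V) (f : V → ℝ), 0 ≤ gam2 (nnLap G) f f x)
    {a b c w1 w2 : V} (hab : G.Adj a b) (hbc : G.Adj b c) (hac : G.Adj a c)
    (hw1 : G.Adj a w1) (hw2 : G.Adj a w2)
    (h1b : w1 ≠ b) (h1c : w1 ≠ c) (h2b : w2 ≠ b) (h2c : w2 ≠ c) (h12 : w1 ≠ w2) :
    False := by
  classical
  have hn1b : ¬ G.Adj w1 b := fun h => (Ne.symm h1c) (hC4 hab.ne hac hbc.symm hw1 h)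
  have hn1c : ¬ G.Adj w1 c := fun h => (Ne.symm h1b) (hC4 hac.ne hab hbc hw1 h)
  have hn2b : ¬ G.Adj w2 b := fun h => (Ne.symm h2c) (hC4 hab.ne hac hbc.symm hw2 h)
  have hn2c : ¬ G.Adj w2 c := fun h => (Ne.symm h2b) (hC4 hac.ne hab hbc hw2 h)
  by_cases hA : ∃ z, G.Adj a z ∧ G.Adj z w1
  · obtain ⟨z, haz, hzw1⟩ := hA
    have hzb : z ≠ b := by rintro rfl; exact hn1b hzw1.symm
    have hzc : z ≠ c := by rintro rfl; exact hn1c hzw1.symm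
    refine key1core hC4 hCD hab hbc hac hw1 haz h1b h1c hzb hzc (Ne.symm hzw1.ne) ?_
    intro z' haz' _ _ h1 h2
    constructor
    · exact fun h => h2 (hC4 hw1.ne haz hzw1 haz' h).symm
    · exact fun h => h1 ((hC4 haz.ne hw1 hzw1.symm haz' h).symm)
  · by_cases hB : ∃ z, G.Adj a z ∧ G.Adj z w2
    · obtain ⟨z, haz, hzw2⟩ := hB
      have hzb : z ≠ b := by rintro rfl; exact hn2b hzw2.symm
      have hzc : z ≠ c := by rintro rfl; exact hn2c hzw2.symm
      refine key1core hC4 hCD hab hbc hac hw2 haz h2b h2c hzb hzc (Ne.symm hzw2.ne) ?_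
      intro z' haz' _ _ h1 h2
      constructor
      · exact fun h => h2 (hC4 hw2.ne haz hzw2 haz' h).symm
      · exact fun h => h1 ((hC4 haz.ne hw2 hzw2.symm haz' h).symm)
    · push_neg at hA hB
      refine key1core hC4 hCD hab hbc hac hw1 hw2 h1b h1c h2b h2c h12 ?_
      intro z haz _ _ _ _
      exact ⟨hA z haz, hB z haz⟩

lemma key2 {G : SimpleGraph V} [G.LocallyFinite] (hC4 : C4Free G)
    (hCD : ∀ (x : V) (f : V → ℝ), 0 ≤ gam2 (nnLap G) f f x)
    {a b c w u : V} (hab : G.Adj a b) (hbc : G.Adj b c) (hac : G.Adj a c)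
    (haw : G.Adj a w) (hwb : w ≠ b) (hwc : w ≠ c)
    (hNa : ∀ y, G.Adj a y → y = b ∨ y = c ∨ y = w)
    (hwu : G.Adj w u) (hua : u ≠ a) : False := by
  classical
  have hnwb : ¬ G.Adj w b := fun h => hwc.symm (hC4 hab.ne hac hbc.symm haw h)
  have hnwc : ¬ G.Adj w c := fun h => hwb.symm (hC4 hac.ne hab hbc haw h)
  have hub : u ≠ b := fun h => hnwb (h ▸ hwu)
  have huc : u ≠ c := fun h => hnwc (h ▸ hwu)
  have hnub : ¬ G.Adj u b := fun h => hua.symm (hC4 hwb haw.symm hab hwu h)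
  have hnuc : ¬ G.Adj u c := fun h => hua.symm (hC4 hwc haw.symm hac hwu h)
  set f : V → ℝ := fun x =>
    if x = a then 0 else if x = u then -4
    else if x = b ∨ x = c ∨ G.Adj x b ∨ G.Adj x c then 1 else -2 with hf
  have hfa : f a = 0 := by simp [hf]
  have hfu : f u = -4 := by simp [hf, hua]
  have hfb : f b = 1 := by simp [hf, hab.ne', Ne.symm hub]
  have hfc : f c = 1 := by simp [hf, hac.ne', Ne.symm huc]
  have hfw : f w = -2 := by simp [hf, haw.ne', hwu.ne, hwb, hwc, hnwb, hnwc]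
  have hfb' : ∀ y, G.Adj b y → y ≠ a → y ≠ c → f y = 1 := by
    intro y hy hya hyc
    have hyu : y ≠ u := by rintro rfl; exact hnub hy.symm
    simp [hf, hya, hyu, hy.symm]
  have hfc' : ∀ y, G.Adj c y → y ≠ a → y ≠ b → f y = 1 := by
    intro y hy hya hyb
    have hyu : y ≠ u := by rintro rfl; exact hnuc hy.symm
    simp [hf, hya, hyu, hy.symm]
  have hfw' : ∀ y, G.Adj w y → y ≠ a → y ≠ u → f y = -2 := by
    intro y hy hya hyu
    have h1 : y ≠ b := by rintro rfl; exact hnwb hy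
    have h2 : y ≠ c := by rintro rfl; exact hnwc hy
    have h3 : ¬ G.Adj y b := fun h => hya.symm (hC4 hwb haw.symm hab hy h)
    have h4 : ¬ G.Adj y c := fun h => hya.symm (hC4 hwc haw.symm hac hy h)
    simp [hf, hya, hyu, h1, h2, h3, h4]
  -- sum helpers
  have hbcne : b ≠ c := hbc.ne
  have hTa : ∀ g : V → ℝ, ∑ y ∈ ({b, c, w} : Finset V), g y = g b + g c + g w := by
    intro g
    rw [Finset.sum_insert (by simp [hbcne, Ne.symm hwb]),
      Finset.sum_insert (by simp [Ne.symm hwc]), Finset.sum_singleton]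
    ring
  have hsubA : ({b, c, w} : Finset V) ⊆ G.neighborFinset a := by
    intro y hy
    rw [SimpleGraph.mem_neighborFinset]
    simp only [Finset.mem_insert, Finset.mem_singleton] at hy
    rcases hy with rfl | rfl | rfl
    exacts [hab, hac, haw]
  have houtA : ∀ (h : V → ℝ), ∀ y, G.Adj a y → y ∉ ({b, c, w} : Finset V) → h y = h a := by
    intro h y hy hyt
    exact absurd (by rcases hNa y hy with rfl | rfl | rfl <;> simp) hyt
  have hsubB : ({a, c} : Finset V) ⊆ G.neighborFinset b := by
    intro y hy
    rw [SimpleGraph.mem_neighborFinset]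
    simp only [Finset.mem_insert, Finset.mem_singleton] at hy
    rcases hy with rfl | rfl
    exacts [hab.symm, hbc]
  have houtB : ∀ y, G.Adj b y → y ∉ ({a, c} : Finset V) → f y = f b := by
    intro y hy hyt
    simp only [Finset.mem_insert, Finset.mem_singleton, not_or] at hyt
    rw [hfb]; exact hfb' y hy hyt.1 hyt.2
  have hsubC : ({a, b} : Finset V) ⊆ G.neighborFinset c := by
    intro y hy
    rw [SimpleGraph.mem_neighborFinset]
    simp only [Finset.mem_insert, Finset.mem_singleton] at hy
    rcases hy with rfl | rfl
    exacts [hac.symm, hbc.symm]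
  have houtC : ∀ y, G.Adj c y → y ∉ ({a, b} : Finset V) → f y = f c := by
    intro y hy hyt
    simp only [Finset.mem_insert, Finset.mem_singleton, not_or] at hyt
    rw [hfc]; exact hfc' y hy hyt.1 hyt.2
  have hsubW : ({a, u} : Finset V) ⊆ G.neighborFinset w := by
    intro y hy
    rw [SimpleGraph.mem_neighborFinset]
    simp only [Finset.mem_insert, Finset.mem_singleton] at hy
    rcases hy with rfl | rfl
    exacts [haw.symm, hwu]
  have houtW : ∀ y, G.Adj w y → y ∉ ({a, u} : Finset V) → f y = f w := by
    intro y hy hyt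
    simp only [Finset.mem_insert, Finset.mem_singleton, not_or] at hyt
    rw [hfw]; exact hfw' y hy hyt.1 hyt.2
  -- Laplacian values
  have hLfa : nnLap G f a = 0 := by
    rw [nnLap_eval hsubA (houtA f), hTa]
    rw [hfa, hfb, hfc, hfw]; norm_num
  have hLfb : nnLap G f b = -1 := by
    rw [nnLap_eval hsubB houtB, Finset.sum_pair hac.ne]
    rw [hfa, hfb, hfc]; norm_num
  have hLfc : nnLap G f c = -1 := by
    rw [nnLap_eval hsubC houtC, Finset.sum_pair hab.ne]
    rw [hfa, hfb, hfc]; norm_num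
  have hLfw : nnLap G f w = 0 := by
    rw [nnLap_eval hsubW houtW, Finset.sum_pair (Ne.symm hua)]
    rw [hfa, hfu, hfw]; norm_num
  -- f*f values
  have hmul : ∀ (g h : V → ℝ) (y : V), (g * h) y = g y * h y := fun _ _ _ => rfl
  have hL2a : nnLap G (f * f) a = 6 := by
    rw [nnLap_eval hsubA (houtA (f * f)), hTa]
    simp only [hmul]
    rw [hfa, hfb, hfc, hfw]; norm_num
  have hL2b : nnLap G (f * f) b = -1 := by
    rw [nnLap_eval hsubB (fun y hy hyt => by simp only [hmul, houtB y hy hyt]),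
      Finset.sum_pair hac.ne]
    simp only [hmul]
    rw [hfa, hfb, hfc]; norm_num
  have hL2c : nnLap G (f * f) c = -1 := by
    rw [nnLap_eval hsubC (fun y hy hyt => by simp only [hmul, houtC y hy hyt]),
      Finset.sum_pair hab.ne]
    simp only [hmul]
    rw [hfa, hfb, hfc]; norm_num
  have hL2w : nnLap G (f * f) w = 8 := by
    rw [nnLap_eval hsubW (fun y hy hyt => by simp only [hmul, houtW y hy hyt]),
      Finset.sum_pair (Ne.symm hua)]
    simp only [hmul]
    rw [hfa, hfu, hfw]; norm_num
  -- gamma values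
  have hGa : gam (nnLap G) f f a = 3 := by
    unfold gam; rw [hL2a, hLfa, hfa]; norm_num
  have hGb : gam (nnLap G) f f b = 1/2 := by
    unfold gam; rw [hL2b, hLfb, hfb]; norm_num
  have hGc : gam (nnLap G) f f c = 1/2 := by
    unfold gam; rw [hL2c, hLfc, hfc]; norm_num
  have hGw : gam (nnLap G) f f w = 4 := by
    unfold gam; rw [hL2w, hLfw, hfw]; norm_num
  have hLG : nnLap G (gam (nnLap G) f f) a = -4 := by
    rw [nnLap_eval hsubA (houtA _), hTa]
    rw [hGa, hGb, hGc, hGw]; norm_num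
  have hgfL : gam (nnLap G) f (nnLap G f) a = -1 := by
    unfold gam
    rw [nnLap_eval hsubA (houtA _), hTa]
    simp only [hmul]
    rw [hfa, hfb, hfc, hfw, hLfa, hLfb, hLfc, hLfw]; norm_num
  have hgLf : gam (nnLap G) (nnLap G f) f a = -1 := by
    unfold gam
    rw [nnLap_eval hsubA (houtA _), hTa]
    simp only [hmul]
    rw [hfa, hfb, hfc, hfw, hLfa, hLfb, hLfc, hLfw]; norm_num
  have h0 := hCD a f
  unfold gam2 at h0
  rw [hLG, hgfL, hgLf] at h0
  norm_num at h0

lemma key3 {G : SimpleGraph V} [G.LocallyFinite] (hC4 : C4Free G)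
    (hCD : ∀ (x : V) (f : V → ℝ), 0 ≤ gam2 (nnLap G) f f x)
    {a b c w u : V} (hab : G.Adj a b) (hbc : G.Adj b c) (hac : G.Adj a c)
    (haw : G.Adj a w) (hwb : w ≠ b) (hwc : w ≠ c)
    (hNa : ∀ y, G.Adj a y → y = b ∨ y = c ∨ y = w)
    (hNw : ∀ y, G.Adj w y → y = a)
    (hbu : G.Adj b u) (hua : u ≠ a) (huc : u ≠ c)
    (hNb : ∀ y, G.Adj b y → y = a ∨ y = c ∨ y = u) : False := by
  classical
  have hnwb : ¬ G.Adj w b := fun h => hwc.symm (hC4 hab.ne hac hbc.symm haw h)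
  have hnwc : ¬ G.Adj w c := fun h => hwb.symm (hC4 hac.ne hab hbc haw h)
  have hub : u ≠ b := hbu.ne'
  have huw : u ≠ w := fun h => hnwb (h ▸ hbu).symm
  have hnuc : ¬ G.Adj u c := fun h => hua.symm (hC4 hbc.ne hab.symm hac hbu h)
  set f : V → ℝ := fun x =>
    if x = a then 0 else if x = u then 2
    else if x = b ∨ x = c ∨ G.Adj x c then 1 else -2 with hf
  have hfa : f a = 0 := by simp [hf]
  have hfu : f u = 2 := by simp [hf, hua]
  have hfb : f b = 1 := by simp [hf, hab.ne', Ne.symm hub]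
  have hfc : f c = 1 := by simp [hf, hac.ne', Ne.symm huc]
  have hfw : f w = -2 := by simp [hf, haw.ne', Ne.symm huw, hwb, hwc, hnwc]
  have hfc' : ∀ y, G.Adj c y → y ≠ a → y ≠ b → f y = 1 := by
    intro y hy hya hyb
    have hyu : y ≠ u := by rintro rfl; exact hnuc hy.symm
    simp [hf, hya, hyu, hy.symm]
  have hbcne : b ≠ c := hbc.ne
  have hTa : ∀ g : V → ℝ, ∑ y ∈ ({b, c, w} : Finset V), g y = g b + g c + g w := by
    intro g
    rw [Finset.sum_insert (by simp [hbcne, Ne.symm hwb]),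
      Finset.sum_insert (by simp [Ne.symm hwc]), Finset.sum_singleton]
    ring
  have hTb : ∀ g : V → ℝ, ∑ y ∈ ({a, c, u} : Finset V), g y = g a + g c + g u := by
    intro g
    rw [Finset.sum_insert (by simp [hac.ne, Ne.symm hua]),
      Finset.sum_insert (by simp [Ne.symm huc]), Finset.sum_singleton]
    ring
  have hsubA : ({b, c, w} : Finset V) ⊆ G.neighborFinset a := by
    intro y hy
    rw [SimpleGraph.mem_neighborFinset]
    simp only [Finset.mem_insert, Finset.mem_singleton] at hy
    rcases hy with rfl | rfl | rfl
    exacts [hab, hac, haw]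
  have houtA : ∀ (h : V → ℝ), ∀ y, G.Adj a y → y ∉ ({b, c, w} : Finset V) → h y = h a := by
    intro h y hy hyt
    exact absurd (by rcases hNa y hy with rfl | rfl | rfl <;> simp) hyt
  have hsubB : ({a, c, u} : Finset V) ⊆ G.neighborFinset b := by
    intro y hy
    rw [SimpleGraph.mem_neighborFinset]
    simp only [Finset.mem_insert, Finset.mem_singleton] at hy
    rcases hy with rfl | rfl | rfl
    exacts [hab.symm, hbc, hbu]
  have houtB : ∀ (h : V → ℝ), ∀ y, G.Adj b y → y ∉ ({a, c, u} : Finset V) → h y = h b := by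
    intro h y hy hyt
    exact absurd (by rcases hNb y hy with rfl | rfl | rfl <;> simp) hyt
  have hsubC : ({a, b} : Finset V) ⊆ G.neighborFinset c := by
    intro y hy
    rw [SimpleGraph.mem_neighborFinset]
    simp only [Finset.mem_insert, Finset.mem_singleton] at hy
    rcases hy with rfl | rfl
    exacts [hac.symm, hbc.symm]
  have houtC : ∀ y, G.Adj c y → y ∉ ({a, b} : Finset V) → f y = f c := by
    intro y hy hyt
    simp only [Finset.mem_insert, Finset.mem_singleton, not_or] at hyt
    rw [hfc]; exact hfc' y hy hyt.1 hyt.2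
  have hsubW : ({a} : Finset V) ⊆ G.neighborFinset w := by
    intro y hy
    rw [SimpleGraph.mem_neighborFinset]
    simp only [Finset.mem_singleton] at hy
    subst hy; exact haw.symm
  have houtW : ∀ (h : V → ℝ), ∀ y, G.Adj w y → y ∉ ({a} : Finset V) → h y = h w := by
    intro h y hy hyt
    exact absurd (by rw [hNw y hy]; simp) hyt
  have hmul : ∀ (g h : V → ℝ) (y : V), (g * h) y = g y * h y := fun _ _ _ => rfl
  have hLfa : nnLap G f a = 0 := by
    rw [nnLap_eval hsubA (houtA f), hTa]
    rw [hfa, hfb, hfc, hfw]; norm_num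
  have hLfb : nnLap G f b = 0 := by
    rw [nnLap_eval hsubB (houtB f), hTb]
    rw [hfa, hfb, hfc, hfu]; norm_num
  have hLfc : nnLap G f c = -1 := by
    rw [nnLap_eval hsubC houtC, Finset.sum_pair hab.ne]
    rw [hfa, hfb, hfc]; norm_num
  have hLfw : nnLap G f w = 2 := by
    rw [nnLap_eval hsubW (houtW f), Finset.sum_singleton]
    rw [hfa, hfw]; norm_num
  have hL2a : nnLap G (f * f) a = 6 := by
    rw [nnLap_eval hsubA (houtA (f * f)), hTa]
    simp only [hmul]
    rw [hfa, hfb, hfc, hfw]; norm_num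
  have hL2b : nnLap G (f * f) b = 2 := by
    rw [nnLap_eval hsubB (houtB (f * f)), hTb]
    simp only [hmul]
    rw [hfa, hfb, hfc, hfu]; norm_num
  have hL2c : nnLap G (f * f) c = -1 := by
    rw [nnLap_eval hsubC (fun y hy hyt => by simp only [hmul, houtC y hy hyt]),
      Finset.sum_pair hab.ne]
    simp only [hmul]
    rw [hfa, hfb, hfc]; norm_num
  have hL2w : nnLap G (f * f) w = -4 := by
    rw [nnLap_eval hsubW (houtW (f * f)), Finset.sum_singleton]
    simp only [hmul]
    rw [hfa, hfw]; norm_num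
  have hGa : gam (nnLap G) f f a = 3 := by
    unfold gam; rw [hL2a, hLfa, hfa]; norm_num
  have hGb : gam (nnLap G) f f b = 1 := by
    unfold gam; rw [hL2b, hLfb, hfb]; norm_num
  have hGc : gam (nnLap G) f f c = 1/2 := by
    unfold gam; rw [hL2c, hLfc, hfc]; norm_num
  have hGw : gam (nnLap G) f f w = 2 := by
    unfold gam; rw [hL2w, hLfw, hfw]; norm_num
  have hLG : nnLap G (gam (nnLap G) f f) a = -11/2 := by
    rw [nnLap_eval hsubA (houtA _), hTa]
    rw [hGa, hGb, hGc, hGw]; norm_num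
  have hgfL : gam (nnLap G) f (nnLap G f) a = -5/2 := by
    unfold gam
    rw [nnLap_eval hsubA (houtA _), hTa]
    simp only [hmul]
    rw [hfa, hfb, hfc, hfw, hLfa, hLfb, hLfc, hLfw]; norm_num
  have hgLf : gam (nnLap G) (nnLap G f) f a = -5/2 := by
    unfold gam
    rw [nnLap_eval hsubA (houtA _), hTa]
    simp only [hmul]
    rw [hfa, hfb, hfc, hfw, hLfa, hLfb, hLfc, hLfw]; norm_num
  have h0 := hCD a f
  unfold gam2 at h0
  rw [hLG, hgfL, hgLf] at h0
  norm_num at h0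

lemma buildC3 {G : SimpleGraph V} {a b c : V}
    (hab : G.Adj a b) (hbc : G.Adj b c) (hac : G.Adj a c)
    (hNa : ∀ y, G.Adj a y → y = b ∨ y = c)
    (hNb : ∀ y, G.Adj b y → y = a ∨ y = c)
    (hNc : ∀ y, G.Adj c y → y = a ∨ y = b)
    (hconn : G.Connected) : Nonempty (G ≃g (⊤ : SimpleGraph (Fin 3))) := by
  classical
  have hmem : ∀ v : V, v = a ∨ v = b ∨ v = c := by
    intro v
    have hS : ∀ x ∈ {v : V | v = a ∨ v = b ∨ v = c}, ∀ y, G.Adj x y →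
        y ∈ {v : V | v = a ∨ v = b ∨ v = c} := by
      rintro x (rfl | rfl | rfl) y hxy
      · rcases hNa y hxy with rfl | rfl <;> simp
      · rcases hNb y hxy with rfl | rfl <;> simp
      · rcases hNc y hxy with rfl | rfl <;> simp
    exact (hconn v a).elim fun p => walk_closure hS p (Or.inl rfl)
  let σ : V → Fin 3 := fun v => if v = a then 0 else if v = b then 1 else 2
  let τ : Fin 3 → V := fun i => if i = 0 then a else if i = 1 then b else c
  have hσa : σ a = 0 := by simp [σ]
  have hσb : σ b = 1 := by simp [σ, hab.ne']
  have hσc : σ c = 2 := by simp [σ, hac.ne', hbc.ne']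
  have hτ0 : τ 0 = a := by simp [τ]
  have hτ1 : τ 1 = b := by simp [τ]
  have hτ2 : τ 2 = c := by simp [τ]
  refine ⟨⟨⟨σ, τ, ?_, ?_⟩, ?_⟩⟩
  · intro v
    rcases hmem v with rfl | rfl | rfl
    · rw [hσa, hτ0]
    · rw [hσb, hτ1]
    · rw [hσc, hτ2]
  · intro i
    fin_cases i
    · show σ (τ 0) = 0; rw [hτ0, hσa]
    · show σ (τ 1) = 1; rw [hτ1, hσb]
    · show σ (τ 2) = 2; rw [hτ2, hσc]
  · intro u v
    show (⊤ : SimpleGraph (Fin 3)).Adj (σ u) (σ v) ↔ G.Adj u v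
    rw [SimpleGraph.top_adj]
    rcases hmem u with rfl | rfl | rfl <;> rcases hmem v with rfl | rfl | rfl
    · exact iff_of_false (by rw [hσa]; simp) (G.irrefl)
    · exact iff_of_true (by rw [hσa, hσb]; decide) hab
    · exact iff_of_true (by rw [hσa, hσc]; decide) hac
    · exact iff_of_true (by rw [hσa, hσb]; decide) hab.symm
    · exact iff_of_false (by rw [hσb]; simp) (G.irrefl)
    · exact iff_of_true (by rw [hσb, hσc]; decide) hbc
    · exact iff_of_true (by rw [hσa, hσc]; decide) hac.symm
    · exact iff_of_true (by rw [hσb, hσc]; decide) hbc.symm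
    · exact iff_of_false (by rw [hσc]; simp) (G.irrefl)

lemma buildC3' {G : SimpleGraph V} {a b c w : V}
    (hab : G.Adj a b) (hbc : G.Adj b c) (hac : G.Adj a c) (haw : G.Adj a w)
    (hNa : ∀ y, G.Adj a y → y = b ∨ y = c ∨ y = w)
    (hNb : ∀ y, G.Adj b y → y = a ∨ y = c)
    (hNc : ∀ y, G.Adj c y → y = a ∨ y = b)
    (hNw : ∀ y, G.Adj w y → y = a)
    (hconn : G.Connected) : Nonempty (G ≃g C3') := by
  classical
  have hwa : w ≠ a := haw.ne'
  have hwb : w ≠ b := by rintro rfl; exact hac.ne' (hNw c hbc)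
  have hwc : w ≠ c := by rintro rfl; exact hab.ne' (hNw b hbc.symm)
  have hnbw : ¬ G.Adj b w := by
    intro h; rcases hNb w h with rfl | rfl
    · exact hwa rfl
    · exact hwc rfl
  have hncw : ¬ G.Adj c w := by
    intro h; rcases hNc w h with rfl | rfl
    · exact hwa rfl
    · exact hwb rfl
  have hmem : ∀ v : V, v = a ∨ v = b ∨ v = c ∨ v = w := by
    intro v
    have hS : ∀ x ∈ {v : V | v = a ∨ v = b ∨ v = c ∨ v = w}, ∀ y, G.Adj x y →
        y ∈ {v : V | v = a ∨ v = b ∨ v = c ∨ v = w} := by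
      rintro x (rfl | rfl | rfl | rfl) y hxy
      · rcases hNa y hxy with rfl | rfl | rfl <;> simp
      · rcases hNb y hxy with rfl | rfl <;> simp
      · rcases hNc y hxy with rfl | rfl <;> simp
      · rw [hNw y hxy]; simp
    exact (hconn v a).elim fun p => walk_closure hS p (Or.inl rfl)
  let σ : V → Fin 4 := fun v => if v = a then 0 else if v = b then 1 else if v = c then 2 else 3
  let τ : Fin 4 → V := fun i => if i = 0 then a else if i = 1 then b else if i = 2 then c else w
  have hσa : σ a = 0 := by simp [σ]
  have hσb : σ b = 1 := by simp [σ, hab.ne']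
  have hσc : σ c = 2 := by simp [σ, hac.ne', hbc.ne']
  have hσw : σ w = 3 := by simp [σ, hwa, hwb, hwc]
  have hτ0 : τ 0 = a := by simp [τ]
  have hτ1 : τ 1 = b := by simp [τ]
  have hτ2 : τ 2 = c := by simp [τ]
  have hτ3 : τ 3 = w := by simp [τ]
  have hC01 : C3'.Adj 0 1 := by simp [C3', SimpleGraph.fromRel_adj]
  have hC02 : C3'.Adj 0 2 := by simp [C3', SimpleGraph.fromRel_adj]
  have hC03 : C3'.Adj 0 3 := by simp [C3', SimpleGraph.fromRel_adj]
  have hC12 : C3'.Adj 1 2 := by simp [C3', SimpleGraph.fromRel_adj]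
  have hC13 : ¬ C3'.Adj 1 3 := by simp [C3', SimpleGraph.fromRel_adj]
  have hC23 : ¬ C3'.Adj 2 3 := by simp [C3', SimpleGraph.fromRel_adj]
  refine ⟨⟨⟨σ, τ, ?_, ?_⟩, ?_⟩⟩
  · intro v
    rcases hmem v with rfl | rfl | rfl | rfl
    · rw [hσa, hτ0]
    · rw [hσb, hτ1]
    · rw [hσc, hτ2]
    · rw [hσw, hτ3]
  · intro i
    fin_cases i
    · show σ (τ 0) = 0; rw [hτ0, hσa]
    · show σ (τ 1) = 1; rw [hτ1, hσb]
    · show σ (τ 2) = 2; rw [hτ2, hσc]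
    · show σ (τ 3) = 3; rw [hτ3, hσw]
  · intro u v
    show C3'.Adj (σ u) (σ v) ↔ G.Adj u v
    rcases hmem u with rfl | rfl | rfl | rfl <;> rcases hmem v with rfl | rfl | rfl | rfl
    · exact iff_of_false (by rw [hσa]; exact C3'.irrefl) (G.irrefl)
    · exact iff_of_true (by rw [hσa, hσb]; exact hC01) hab
    · exact iff_of_true (by rw [hσa, hσc]; exact hC02) hac
    · exact iff_of_true (by rw [hσa, hσw]; exact hC03) haw
    · exact iff_of_true (by rw [hσa, hσb]; exact hC01.symm) hab.symm
    · exact iff_of_false (by rw [hσb]; exact C3'.irrefl) (G.irrefl)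
    · exact iff_of_true (by rw [hσb, hσc]; exact hC12) hbc
    · exact iff_of_false (by rw [hσb, hσw]; exact hC13) hnbw
    · exact iff_of_true (by rw [hσa, hσc]; exact hC02.symm) hac.symm
    · exact iff_of_true (by rw [hσb, hσc]; exact hC12.symm) hbc.symm
    · exact iff_of_false (by rw [hσc]; exact C3'.irrefl) (G.irrefl)
    · exact iff_of_false (by rw [hσc, hσw]; exact hC23) hncw
    · exact iff_of_true (by rw [hσa, hσw]; exact hC03.symm) haw.symm
    · exact iff_of_false (by rw [hσb, hσw]; exact fun h => hC13 h.symm) fun h => hnbw h.symm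
    · exact iff_of_false (by rw [hσc, hσw]; exact fun h => hC23 h.symm) fun h => hncw h.symm
    · exact iff_of_false (by rw [hσw]; exact C3'.irrefl) (G.irrefl)

/-- A connected locally finite `C₄`-free graph containing a triangle and
satisfying non-normalized `CD(0,∞)` is isomorphic to `C₃` or `C₃'`. -/
theorem stmt_12 (G : SimpleGraph V) [G.LocallyFinite] (hC4 : C4Free G)
    (hCD : ∀ (x : V) (f : V → ℝ), 0 ≤ gam2 (nnLap G) f f x)
    (htri : ∃ a b c : V, G.Adj a b ∧ G.Adj b c ∧ G.Adj a c)
    (hconn : G.Connected) :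
    Nonempty (G ≃g (⊤ : SimpleGraph (Fin 3))) ∨ Nonempty (G ≃g C3') := by
  classical
  obtain ⟨a, b, c, hab, hbc, hac⟩ := htri
  by_cases hA : ∃ w, G.Adj a w ∧ w ≠ b ∧ w ≠ c
  · obtain ⟨w, haw, hwb, hwc⟩ := hA
    right
    have hNa : ∀ y, G.Adj a y → y = b ∨ y = c ∨ y = w := by
      intro y hy
      by_contra h
      push_neg at h
      exact key1 hC4 hCD hab hbc hac haw hy hwb hwc h.1 h.2.1 (Ne.symm h.2.2)
    have hNw : ∀ y, G.Adj w y → y = a := by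
      intro y hy
      by_contra h
      exact key2 hC4 hCD hab hbc hac haw hwb hwc hNa hy h
    have hNb : ∀ y, G.Adj b y → y = a ∨ y = c := by
      intro y hy
      by_contra h
      push_neg at h
      have hNb' : ∀ z, G.Adj b z → z = a ∨ z = c ∨ z = y := by
        intro z hz
        by_contra h2
        push_neg at h2
        exact key1 hC4 hCD hab.symm hac hbc hy hz h.1 h.2 h2.1 h2.2.1 (Ne.symm h2.2.2)
      exact key3 hC4 hCD hab hbc hac haw hwb hwc hNa hNw hy h.1 h.2 hNb'
    have hNc : ∀ y, G.Adj c y → y = a ∨ y = b := by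
      intro y hy
      by_contra h
      push_neg at h
      have hNc' : ∀ z, G.Adj c z → z = a ∨ z = b ∨ z = y := by
        intro z hz
        by_contra h2
        push_neg at h2
        exact key1 hC4 hCD hac.symm hab hbc.symm hy hz h.1 h.2 h2.1 h2.2.1 (Ne.symm h2.2.2)
      exact key3 hC4 hCD hac hbc.symm hab haw hwc hwb
        (fun y hy => by rcases hNa y hy with h' | h' | h' <;> tauto) hNw hy h.1 h.2 hNc'
    exact buildC3' hab hbc hac haw hNa hNb hNc hNw hconn
  · push_neg at hA
    have hNa : ∀ y, G.Adj a y → y = b ∨ y = c := by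
      intro y hy
      by_cases h : y = b
      · exact Or.inl h
      · exact Or.inr (hA y hy h)
    by_cases hB : ∃ w, G.Adj b w ∧ w ≠ a ∧ w ≠ c
    · obtain ⟨w, hbw, hwa, hwc⟩ := hB
      right
      have hNb : ∀ y, G.Adj b y → y = a ∨ y = c ∨ y = w := by
        intro y hy
        by_contra h
        push_neg at h
        exact key1 hC4 hCD hab.symm hac hbc hbw hy hwa hwc h.1 h.2.1 (Ne.symm h.2.2)
      have hNw : ∀ y, G.Adj w y → y = b := by
        intro y hy
        by_contra h
        exact key2 hC4 hCD hab.symm hac hbc hbw hwa hwc hNb hy h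
      have hNc : ∀ y, G.Adj c y → y = b ∨ y = a := by
        intro y hy
        by_contra h
        push_neg at h
        have hNc' : ∀ z, G.Adj c z → z = b ∨ z = a ∨ z = y := by
          intro z hz
          by_contra h2
          push_neg at h2
          exact key1 hC4 hCD hbc.symm hab.symm hac.symm hy hz h.1 h.2 h2.1 h2.2.1 (Ne.symm h2.2.2)
        exact key3 hC4 hCD hbc hac.symm hab.symm hbw hwc hwa
          (fun y hy => by rcases hNb y hy with h' | h' | h' <;> tauto) hNw hy h.1 h.2 hNc'
      have hNa' : ∀ y, G.Adj a y → y = b ∨ y = c := hNa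
      exact buildC3' hab.symm hac hbc hbw hNb hNa' hNc hNw hconn
    · by_cases hC : ∃ w, G.Adj c w ∧ w ≠ a ∧ w ≠ b
      · obtain ⟨w, hcw, hwa, hwb⟩ := hC
        right
        have hNc : ∀ y, G.Adj c y → y = a ∨ y = b ∨ y = w := by
          intro y hy
          by_contra h
          push_neg at h
          exact key1 hC4 hCD hac.symm hab hbc.symm hcw hy hwa hwb h.1 h.2.1 (Ne.symm h.2.2)
        have hNw : ∀ y, G.Adj w y → y = c := by
          intro y hy
          by_contra h
          exact key2 hC4 hCD hac.symm hab hbc.symm hcw hwa hwb hNc hy h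
        push_neg at hB
        have hNa' : ∀ y, G.Adj a y → y = c ∨ y = b := by
          intro y hy; rcases hNa y hy with h' | h' <;> tauto
        have hNb' : ∀ y, G.Adj b y → y = c ∨ y = a := by
          intro y hy
          by_cases h : y = a
          · exact Or.inr h
          · exact Or.inl (hB y hy h)
        exact buildC3' hac.symm hab hbc.symm hcw hNc hNa' hNb' hNw hconn
      · left
        push_neg at hB hC
        have hNb' : ∀ y, G.Adj b y → y = a ∨ y = c := by
          intro y hy
          by_cases h : y = a
          · exact Or.inl h
          · exact Or.inr (hB y hy h)
        have hNc' : ∀ y, G.Adj c y → y = a ∨ y = b := by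
          intro y hy
          by_cases h : y = a
          · exact Or.inl h
          · exact Or.inr (hC y hy h)
        exact buildC3 hab hbc hac hNa hNb' hNc' hconn
end

section
/- Let G be a simple C4-free graph with unweighted normalized Laplacian satisfying CD(0,∞), and suppose the vertex x lies in a triangle with neighbors x1, x2 (x, x1, x2 pairwise adjacent). If y is a neighbor of x with d_y ≥ 3 such that the edge xy is in no triangle, then CD(0,∞) fails at x; concretely, the function f with f(x1)=f(x2)=−1, f(y)=2, f=0 on N(x)∖{x1,x2,y}, extended by f(z)=2f(w) for z∈S2(x) adjacent to w∈S1(x), satisfies Γ₂(f)(x) < 0. -/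
open Finset

variable {V : Type*}

lemma nLap_def (G : SimpleGraph V) [G.LocallyFinite] (g : V → ℝ) (u : V) :
    nLap G g u = (∑ v ∈ G.neighborFinset u, (g v - g u)) / (G.degree u : ℝ) := rfl

lemma sum_const_off [DecidableEq V] (s t : Finset V) (hts : t ⊆ s) (g : V → ℝ) (C : ℝ)
    (h : ∀ v ∈ s, v ∉ t → g v = C) :
    ∑ v ∈ s, g v = ∑ v ∈ t, g v + ((s.card : ℝ) - t.card) * C := by
  rw [← Finset.sum_sdiff hts]
  have h2 : ∑ v ∈ s \ t, g v = ((s.card : ℝ) - t.card) * C := by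
    rw [Finset.sum_congr rfl (fun v hv => h v (Finset.sdiff_subset hv) (Finset.mem_sdiff.mp hv).2),
      Finset.sum_const, nsmul_eq_mul, Finset.card_sdiff_of_subset hts,
      Nat.cast_sub (Finset.card_le_card hts)]
  rw [h2]; ring

lemma eval1 [DecidableEq V] (s : Finset V) (a : V) (ha : a ∈ s) (g : V → ℝ) (C : ℝ)
    (h : ∀ v ∈ s, v ≠ a → g v = C) :
    ∑ v ∈ s, g v = g a + ((s.card : ℝ) - 1) * C := by
  have h' := sum_const_off s {a} (by simpa using ha) g C (by simpa using h)
  simpa using h'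

lemma eval2 [DecidableEq V] (s : Finset V) (a b : V) (ha : a ∈ s) (hb : b ∈ s) (hab : a ≠ b)
    (g : V → ℝ) (C : ℝ) (h : ∀ v ∈ s, v ≠ a → v ≠ b → g v = C) :
    ∑ v ∈ s, g v = g a + g b + ((s.card : ℝ) - 2) * C := by
  have h' := sum_const_off s {a, b}
    (by intro v hv; simp only [Finset.mem_insert, Finset.mem_singleton] at hv
        rcases hv with rfl | rfl <;> assumption) g C
    (by intro v hv hvt; simp only [Finset.mem_insert, Finset.mem_singleton, not_or] at hvt
        exact h v hv hvt.1 hvt.2)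
  rw [h', Finset.sum_insert (by simpa using hab), Finset.sum_singleton,
    Finset.card_insert_of_notMem (by simpa using hab), Finset.card_singleton]
  push_cast; ring

lemma eval3 [DecidableEq V] (s : Finset V) (a b c : V) (ha : a ∈ s) (hb : b ∈ s) (hc : c ∈ s)
    (hab : a ≠ b) (hac : a ≠ c) (hbc : b ≠ c)
    (g : V → ℝ) (C : ℝ) (h : ∀ v ∈ s, v ≠ a → v ≠ b → v ≠ c → g v = C) :
    ∑ v ∈ s, g v = g a + g b + g c + ((s.card : ℝ) - 3) * C := by
  have h' := sum_const_off s {a, b, c}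
    (by intro v hv; simp only [Finset.mem_insert, Finset.mem_singleton] at hv
        rcases hv with rfl | rfl | rfl <;> assumption) g C
    (by intro v hv hvt; simp only [Finset.mem_insert, Finset.mem_singleton, not_or] at hvt
        exact h v hv hvt.1 hvt.2.1 hvt.2.2)
  rw [h', Finset.sum_insert (by simp [hab, hac]), Finset.sum_insert (by simpa using hbc),
    Finset.sum_singleton, Finset.card_insert_of_notMem (by simp [hab, hac]),
    Finset.card_insert_of_notMem (by simpa using hbc), Finset.card_singleton]
  push_cast; ring

lemma gam_sq (G : SimpleGraph V) [G.LocallyFinite] (f : V → ℝ) (u : V) :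
    gam (nLap G) f f u = (∑ v ∈ G.neighborFinset u, (f v - f u) ^ 2) / (2 * (G.degree u : ℝ)) := by
  have key : ∑ v ∈ G.neighborFinset u, ((f * f) v - (f * f) u)
      = ∑ v ∈ G.neighborFinset u, ((f v - f u) ^ 2 + 2 * f u * (f v - f u)) := by
    refine Finset.sum_congr rfl fun v _ => ?_
    simp only [Pi.mul_apply]; ring
  simp only [gam, nLap, key, Finset.sum_add_distrib, ← Finset.mul_sum]
  by_cases hdz : (G.degree u : ℝ) = 0
  · simp [hdz]
  · field_simp
    ring

lemma gam_comm_s13 (G : SimpleGraph V) [G.LocallyFinite] (f g : V → ℝ) (u : V) :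
    gam (nLap G) g f u = gam (nLap G) f g u := by
  unfold gam
  rw [mul_comm g f]
  ring

set_option maxHeartbeats 1000000 in
/-- If `x, x₁, x₂` form a triangle in a `C₄`-free graph with normalized
Laplacian, and `y` is a neighbor of `x` of degree at least 3 whose edge `xy`
lies in no triangle, then the explicit test function (with `f x₁ = f x₂ = -1`,
`f y = 2`, `f = 0` on the rest of `N(x)`, extended by `f z = 2 f w` for
`z ∈ S₂(x)` adjacent to `w ∈ S₁(x)`) witnesses the failure of `CD(0,∞)` at `x`:
`Γ₂(f)(x) < 0`. -/
theorem stmt_13 (G : SimpleGraph V) [G.LocallyFinite] (hC4 : C4Free G)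
    (hd : ∀ v : V, 0 < G.degree v) (x x1 x2 y : V)
    (h1 : G.Adj x x1) (h2 : G.Adj x x2) (h12 : G.Adj x1 x2)
    (hy : G.Adj x y) (hy1 : y ≠ x1) (hy2 : y ≠ x2)
    (hdy : 3 ≤ G.degree y)
    (hnt : ¬ ∃ z, G.Adj x z ∧ G.Adj y z)
    (f : V → ℝ) (hfx : f x = 0) (hf1 : f x1 = -1) (hf2 : f x2 = -1)
    (hfy : f y = 2)
    (hf0 : ∀ w, G.Adj x w → w ≠ x1 → w ≠ x2 → w ≠ y → f w = 0)
    (hfS2 : ∀ z w, G.dist x z = 2 → G.Adj x w → G.Adj z w → f z = 2 * f w) :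
    gam2 (nLap G) f f x < 0 := by
  classical
  have hx1 : x ≠ x1 := h1.ne
  have hx2 : x ≠ x2 := h2.ne
  have hxy : x ≠ y := hy.ne
  have h12' : x1 ≠ x2 := h12.ne
  have h1y : x1 ≠ y := fun h => hy1 h.symm
  have h2y : x2 ≠ y := fun h => hy2 h.symm
  -- membership facts
  have m1 : x1 ∈ G.neighborFinset x := (SimpleGraph.mem_neighborFinset G x x1).mpr h1
  have m2 : x2 ∈ G.neighborFinset x := (SimpleGraph.mem_neighborFinset G x x2).mpr h2
  have my : y ∈ G.neighborFinset x := (SimpleGraph.mem_neighborFinset G x y).mpr hy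
  have m1x : x ∈ G.neighborFinset x1 := (SimpleGraph.mem_neighborFinset G x1 x).mpr h1.symm
  have m12 : x2 ∈ G.neighborFinset x1 := (SimpleGraph.mem_neighborFinset G x1 x2).mpr h12
  have m2x : x ∈ G.neighborFinset x2 := (SimpleGraph.mem_neighborFinset G x2 x).mpr h2.symm
  have m21 : x1 ∈ G.neighborFinset x2 := (SimpleGraph.mem_neighborFinset G x2 x1).mpr h12.symm
  have myx : x ∈ G.neighborFinset y := (SimpleGraph.mem_neighborFinset G y x).mpr hy.symm
  -- degrees as reals
  have hdx0 : (0:ℝ) < (G.degree x : ℝ) := by exact_mod_cast hd x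
  have hd10 : (0:ℝ) < (G.degree x1 : ℝ) := by exact_mod_cast hd x1
  have hd20 : (0:ℝ) < (G.degree x2 : ℝ) := by exact_mod_cast hd x2
  have hdy0 : (0:ℝ) < (G.degree y : ℝ) := by exact_mod_cast hd y
  have hd1ge : (2:ℝ) ≤ (G.degree x1 : ℝ) := by
    have hsub : ({x, x2} : Finset V) ⊆ G.neighborFinset x1 := by
      intro v hv; simp only [Finset.mem_insert, Finset.mem_singleton] at hv
      rcases hv with rfl | rfl <;> assumption
    have := Finset.card_le_card hsub
    rw [Finset.card_insert_of_notMem (by simpa using hx2), Finset.card_singleton] at this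
    exact_mod_cast this
  have hd2ge : (2:ℝ) ≤ (G.degree x2 : ℝ) := by
    have hsub : ({x, x1} : Finset V) ⊆ G.neighborFinset x2 := by
      intro v hv; simp only [Finset.mem_insert, Finset.mem_singleton] at hv
      rcases hv with rfl | rfl <;> assumption
    have := Finset.card_le_card hsub
    rw [Finset.card_insert_of_notMem (by simpa using hx1), Finset.card_singleton] at this
    exact_mod_cast this
  have hdyge : (3:ℝ) ≤ (G.degree y : ℝ) := by exact_mod_cast hdy
  -- distance-2 extension
  have hdist2 : ∀ w z, G.Adj x w → G.Adj w z → z ≠ x → ¬ G.Adj x z → f z = 2 * f w := by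
    intro w z hxw hwz hzx hnadj
    refine hfS2 z w ?_ hxw hwz.symm
    have hle : G.dist x z ≤ 2 := by
      have := SimpleGraph.dist_le (SimpleGraph.Walk.cons hxw hwz.toWalk)
      simpa using this
    have h0 : G.dist x z ≠ 0 := by
      intro h
      rcases SimpleGraph.dist_eq_zero_iff_eq_or_not_reachable.mp h with h' | h'
      · exact hzx h'.symm
      · exact h' (SimpleGraph.Walk.cons hxw hwz.toWalk).reachable
    have h1' : G.dist x z ≠ 1 := fun h => hnadj (SimpleGraph.dist_eq_one_iff_adj.mp h)
    omega
  -- values on second neighborhoods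
  have hNy : ∀ v ∈ G.neighborFinset y, v ≠ x → f v = 4 := by
    intro v hv hvx
    rw [SimpleGraph.mem_neighborFinset] at hv
    have hnadj : ¬ G.Adj x v := fun h => hnt ⟨v, h, hv⟩
    rw [hdist2 y v hy hv hvx hnadj, hfy]; norm_num
  have hN1 : ∀ v ∈ G.neighborFinset x1, v ≠ x → v ≠ x2 → f v = -2 := by
    intro v hv hvx hvx2
    rw [SimpleGraph.mem_neighborFinset] at hv
    have hnadj : ¬ G.Adj x v := fun h => hvx2 (hC4 hx1 h hv.symm h2 h12.symm)
    rw [hdist2 x1 v h1 hv hvx hnadj, hf1]; norm_num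
  have hN2 : ∀ v ∈ G.neighborFinset x2, v ≠ x → v ≠ x1 → f v = -2 := by
    intro v hv hvx hvx1
    rw [SimpleGraph.mem_neighborFinset] at hv
    have hnadj : ¬ G.Adj x v := fun h => hvx1 (hC4 hx2 h hv.symm h1 h12)
    rw [hdist2 x2 v h2 hv hvx hnadj, hf2]; norm_num
  have hNw : ∀ w, G.Adj x w → w ≠ x1 → w ≠ x2 → w ≠ y → ∀ v, G.Adj w v → f v = 0 := by
    intro w hxw hw1 hw2 hwy v hwv
    by_cases hvx : v = x
    · rw [hvx, hfx]
    by_cases hadj : G.Adj x v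
    · have hv1 : v ≠ x1 := by
        intro h; subst h
        exact hw2 (hC4 hx1 hxw hwv h2 h12.symm)
      have hv2 : v ≠ x2 := by
        intro h; subst h
        exact hw1 (hC4 hx2 hxw hwv h1 h12)
      have hvy : v ≠ y := by
        intro h; subst h; exact hnt ⟨w, hxw, hwv.symm⟩
      exact hf0 v hadj hv1 hv2 hvy
    · rw [hdist2 w v hxw hwv hvx hadj, hf0 w hxw hw1 hw2 hwy]; ring
  -- Laplacian values
  have hLfx : nLap G f x = 0 := by
    rw [nLap_def G f x,
      eval3 _ x1 x2 y m1 m2 my h12' h1y h2y _ 0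
        (by intro v hv hv1 hv2 hv3
            rw [SimpleGraph.mem_neighborFinset] at hv
            rw [hf0 v hv hv1 hv2 hv3, hfx]; ring)]
    rw [hf1, hf2, hfy, hfx]
    ring_nf
  have hLf1 : nLap G f x1 = (3 - (G.degree x1 : ℝ)) / (G.degree x1 : ℝ) := by
    rw [nLap_def G f x1,
      eval2 _ x x2 m1x m12 hx2 _ (-1)
        (by intro v hv hvx hvx2
            rw [hN1 v hv hvx hvx2, hf1]; ring),
      SimpleGraph.card_neighborFinset_eq_degree]
    rw [hf1, hf2, hfx]
    congr 1; ring
  have hLf2 : nLap G f x2 = (3 - (G.degree x2 : ℝ)) / (G.degree x2 : ℝ) := by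
    rw [nLap_def G f x2,
      eval2 _ x x1 m2x m21 hx1 _ (-1)
        (by intro v hv hvx hvx1
            rw [hN2 v hv hvx hvx1, hf2]; ring),
      SimpleGraph.card_neighborFinset_eq_degree]
    rw [hf1, hf2, hfx]
    congr 1; ring
  have hLfy : nLap G f y = (2 * (G.degree y : ℝ) - 4) / (G.degree y : ℝ) := by
    rw [nLap_def G f y,
      eval1 _ x myx _ 2
        (by intro v hv hvx
            rw [hNy v hv hvx, hfy]; ring),
      SimpleGraph.card_neighborFinset_eq_degree]
    rw [hfx, hfy]
    congr 1; ring
  have hLfw : ∀ w, G.Adj x w → w ≠ x1 → w ≠ x2 → w ≠ y → nLap G f w = 0 := by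
    intro w hxw hw1 hw2 hwy
    rw [nLap_def G f w, Finset.sum_eq_zero, zero_div]
    intro v hv
    rw [SimpleGraph.mem_neighborFinset] at hv
    rw [hNw w hxw hw1 hw2 hwy v hv, hf0 w hxw hw1 hw2 hwy]; ring
  -- Gamma values
  have hGx : gam (nLap G) f f x = 3 / (G.degree x : ℝ) := by
    rw [gam_sq,
      eval3 _ x1 x2 y m1 m2 my h12' h1y h2y _ 0
        (by intro v hv hv1 hv2 hv3
            rw [SimpleGraph.mem_neighborFinset] at hv
            rw [hf0 v hv hv1 hv2 hv3, hfx]; ring)]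
    rw [hf1, hf2, hfy, hfx]
    rw [div_eq_div_iff (by positivity) (ne_of_gt hdx0)]
    ring
  have hG1 : gam (nLap G) f f x1 = ((G.degree x1 : ℝ) - 1) / (2 * (G.degree x1 : ℝ)) := by
    rw [gam_sq,
      eval2 _ x x2 m1x m12 hx2 _ 1
        (by intro v hv hvx hvx2
            rw [hN1 v hv hvx hvx2, hf1]; ring),
      SimpleGraph.card_neighborFinset_eq_degree]
    rw [hf1, hf2, hfx]
    congr 1; ring
  have hG2 : gam (nLap G) f f x2 = ((G.degree x2 : ℝ) - 1) / (2 * (G.degree x2 : ℝ)) := by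
    rw [gam_sq,
      eval2 _ x x1 m2x m21 hx1 _ 1
        (by intro v hv hvx hvx1
            rw [hN2 v hv hvx hvx1, hf2]; ring),
      SimpleGraph.card_neighborFinset_eq_degree]
    rw [hf1, hf2, hfx]
    congr 1; ring
  have hGy : gam (nLap G) f f y = 2 := by
    rw [gam_sq,
      eval1 _ x myx _ 4
        (by intro v hv hvx
            rw [hNy v hv hvx, hfy]; ring),
      SimpleGraph.card_neighborFinset_eq_degree]
    rw [hfx, hfy]
    rw [div_eq_iff (by positivity)]
    ring
  have hGw : ∀ w, G.Adj x w → w ≠ x1 → w ≠ x2 → w ≠ y → gam (nLap G) f f w = 0 := by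
    intro w hxw hw1 hw2 hwy
    rw [gam_sq, Finset.sum_eq_zero, zero_div]
    intro v hv
    rw [SimpleGraph.mem_neighborFinset] at hv
    rw [hNw w hxw hw1 hw2 hwy v hv, hf0 w hxw hw1 hw2 hwy]; ring
  -- the two main pieces
  have hA : nLap G (gam (nLap G) f f) x
      = ((((G.degree x1 : ℝ) - 1) / (2 * (G.degree x1 : ℝ)) - 3 / (G.degree x : ℝ))
        + (((G.degree x2 : ℝ) - 1) / (2 * (G.degree x2 : ℝ)) - 3 / (G.degree x : ℝ))
        + (2 - 3 / (G.degree x : ℝ))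
        + ((G.degree x : ℝ) - 3) * (0 - 3 / (G.degree x : ℝ))) / (G.degree x : ℝ) := by
    rw [nLap_def G (gam (nLap G) f f) x,
      eval3 _ x1 x2 y m1 m2 my h12' h1y h2y _ (0 - 3 / (G.degree x : ℝ))
        (by intro v hv hv1 hv2 hv3
            rw [SimpleGraph.mem_neighborFinset] at hv
            rw [hGw v hv hv1 hv2 hv3, hGx]),
      SimpleGraph.card_neighborFinset_eq_degree, hG1, hG2, hGy, hGx]
  have hB : gam (nLap G) f (nLap G f) x
      = ((-1) * ((3 - (G.degree x1 : ℝ)) / (G.degree x1 : ℝ))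
        + (-1) * ((3 - (G.degree x2 : ℝ)) / (G.degree x2 : ℝ))
        + 2 * ((2 * (G.degree y : ℝ) - 4) / (G.degree y : ℝ))) / (G.degree x : ℝ) / 2 := by
    have hexp : gam (nLap G) f (nLap G f) x = nLap G (f * nLap G f) x / 2 := by
      rw [gam, hfx, hLfx]; ring
    rw [hexp, nLap_def G (f * nLap G f) x,
      eval3 _ x1 x2 y m1 m2 my h12' h1y h2y _ 0
        (by intro v hv hv1 hv2 hv3
            rw [SimpleGraph.mem_neighborFinset] at hv
            simp only [Pi.mul_apply]
            rw [hf0 v hv hv1 hv2 hv3, hfx]; ring)]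
    simp only [Pi.mul_apply]
    rw [hf1, hf2, hfy, hfx, hLf1, hLf2, hLfy]
    congr 2
    ring
  have hcomm : gam (nLap G) (nLap G f) f x = gam (nLap G) f (nLap G f) x :=
    gam_comm_s13 G f (nLap G f) x
  have hfinal : gam2 (nLap G) f f x
      = (5 / (2 * (G.degree x1 : ℝ)) + 5 / (2 * (G.degree x2 : ℝ))
        + 8 / (G.degree y : ℝ) - 6) / (2 * (G.degree x : ℝ)) := by
    rw [gam2, hcomm, hB, hA]
    field_simp
    ring
  rw [hfinal]
  apply div_neg_of_neg_of_pos _ (by positivity)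
  have b1 : 5 / (2 * (G.degree x1 : ℝ)) ≤ 5 / 4 := by
    rw [div_le_div_iff₀ (by positivity) (by norm_num)]; linarith
  have b2 : 5 / (2 * (G.degree x2 : ℝ)) ≤ 5 / 4 := by
    rw [div_le_div_iff₀ (by positivity) (by norm_num)]; linarith
  have b3 : 8 / (G.degree y : ℝ) ≤ 8 / 3 := by
    rw [div_le_div_iff₀ (by positivity) (by norm_num)]; linarith
  linarith
end

section
/- Let G be the friendship graph F_k (k triangles sharing a single common vertex) with the unweighted normalized Laplacian. If k ≥ 8, then CD(0,∞) fails: there exist a vertex x and a function f with Γ₂(f)(x) < 0. Specifically, at a degree-2 vertex x with neighbors y (the hub, degree 2k ≥ 16) and z (degree 2), the function with f(y)=13, f(z)=1, extended by f(w)=2f(v) for w∈S2(x) adjacent to v∈S1(x) and 0 elsewhere, gives Γ₂(f)(x) < 0. -/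
open Finset

variable {V : Type*}

/-- The friendship graph `F_k`: `k` triangles sharing the common hub vertex `0`;
the `i`-th triangle has the outer vertices `2i+1` and `2i+2`. -/
def friendship (k : ℕ) : SimpleGraph (Fin (2 * k + 1)) :=
  SimpleGraph.fromRel (fun u v => u = 0 ∨ (u.val + 1) / 2 = (v.val + 1) / 2)

noncomputable instance (k : ℕ) : (friendship k).LocallyFinite :=
  fun _ => Fintype.ofFinite _

lemma friendship_adj (k : ℕ) (u v : Fin (2 * k + 1)) :
    (friendship k).Adj u v ↔
      u.val ≠ v.val ∧ (u.val = 0 ∨ v.val = 0 ∨ (u.val + 1) / 2 = (v.val + 1) / 2) := by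
  simp only [friendship, SimpleGraph.fromRel_adj, ne_eq, Fin.ext_iff, Fin.val_zero]
  omega

lemma nbr0 (k : ℕ) (hk : 8 ≤ k) :
    (friendship k).neighborFinset ⟨0, by omega⟩ = Finset.univ.erase ⟨0, by omega⟩ := by
  ext v
  simp only [SimpleGraph.mem_neighborFinset, friendship_adj, Finset.mem_erase,
    Finset.mem_univ, and_true, ne_eq, Fin.ext_iff, true_or]
  omega

lemma nbr1 (k : ℕ) (hk : 8 ≤ k) :
    (friendship k).neighborFinset ⟨1, by omega⟩ = {⟨0, by omega⟩, ⟨2, by omega⟩} := by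
  ext v
  simp only [SimpleGraph.mem_neighborFinset, friendship_adj, Finset.mem_insert,
    Finset.mem_singleton, Fin.ext_iff]
  omega

lemma nbr2 (k : ℕ) (hk : 8 ≤ k) :
    (friendship k).neighborFinset ⟨2, by omega⟩ = {⟨0, by omega⟩, ⟨1, by omega⟩} := by
  ext v
  simp only [SimpleGraph.mem_neighborFinset, friendship_adj, Finset.mem_insert,
    Finset.mem_singleton, Fin.ext_iff]
  omega

lemma sum_univ_fin (k : ℕ) (hk : 8 ≤ k) (h : ℕ → ℝ)
    (hc : ∀ i, 3 ≤ i → h i = h 3) :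
    ∑ v : Fin (2 * k + 1), h v.val = h 0 + h 1 + h 2 + (2 * (k : ℝ) - 2) * h 3 := by
  rw [Fin.sum_univ_eq_sum_range (fun i => h i), Finset.range_eq_Ico,
    ← Finset.sum_Ico_consecutive _ (by omega : 0 ≤ 3) (by omega : 3 ≤ 2 * k + 1)]
  have h2 : ∑ i ∈ Finset.Ico 3 (2 * k + 1), h i = (2 * (k : ℝ) - 2) * h 3 := by
    rw [Finset.sum_congr rfl fun i hi => hc i (Finset.mem_Ico.mp hi).1,
      Finset.sum_const, Nat.card_Ico, nsmul_eq_mul]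
    have e : ((2 * k + 1 - 3 : ℕ) : ℝ) = 2 * (k : ℝ) - 2 := by
      have e2 : 2 * k + 1 - 3 = 2 * k - 2 := by omega
      rw [e2, Nat.cast_sub (by omega : 2 ≤ 2 * k)]
      push_cast; ring
    rw [e]
  rw [h2, ← Finset.range_eq_Ico, Finset.sum_range_succ, Finset.sum_range_succ,
    Finset.sum_range_one]

/-- For `k ≥ 8`, the friendship graph `F_k` with the unweighted normalized
Laplacian fails `CD(0,∞)`: there are a vertex `x` and a function `f` with
`Γ₂(f)(x) < 0`. -/
theorem stmt_16 (k : ℕ) (hk : 8 ≤ k) :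
    ∃ (x : Fin (2 * k + 1)) (f : Fin (2 * k + 1) → ℝ),
      gam2 (nLap (friendship k)) f f x < 0 := by
  have hK8 : (8 : ℝ) ≤ (k : ℝ) := by exact_mod_cast hk
  have hK0 : (0 : ℝ) < (k : ℝ) := by linarith
  have hKne : ((k : ℝ)) ≠ 0 := ne_of_gt hK0
  set K : ℝ := (k : ℝ) with hKdef
  set v0 : Fin (2 * k + 1) := ⟨0, by omega⟩ with hv0
  set v1 : Fin (2 * k + 1) := ⟨1, by omega⟩ with hv1
  set v2 : Fin (2 * k + 1) := ⟨2, by omega⟩ with hv2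
  set h : ℕ → ℝ := fun i => if i = 0 then 13 else if i = 1 then 0 else if i = 2 then 1 else 26
    with hh
  set f : Fin (2 * k + 1) → ℝ := fun v => h v.val with hf
  refine ⟨v1, f, ?_⟩
  -- values of h
  have hh0 : h 0 = 13 := rfl
  have hh1 : h 1 = 0 := rfl
  have hh2 : h 2 = 1 := rfl
  have hh3 : h 3 = 26 := rfl
  have hhc : ∀ i, 3 ≤ i → h i = h 3 := by
    intro i hi
    simp only [hh]
    rw [if_neg (by omega), if_neg (by omega), if_neg (by omega)]
    norm_num
  have hval0 : f v0 = 13 := rfl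
  have hval1 : f v1 = 0 := rfl
  have hval2 : f v2 = 1 := rfl
  -- degrees
  have hdeg1 : ((friendship k).degree v1 : ℝ) = 2 := by
    rw [← SimpleGraph.card_neighborFinset_eq_degree, nbr1 k hk,
      Finset.card_insert_of_notMem (by simp [Fin.ext_iff]), Finset.card_singleton]
    norm_num
  have hdeg2 : ((friendship k).degree v2 : ℝ) = 2 := by
    rw [← SimpleGraph.card_neighborFinset_eq_degree, nbr2 k hk,
      Finset.card_insert_of_notMem (by simp [Fin.ext_iff]), Finset.card_singleton]
    norm_num
  have hdeg0 : ((friendship k).degree v0 : ℝ) = 2 * K := by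
    rw [← SimpleGraph.card_neighborFinset_eq_degree, nbr0 k hk,
      Finset.card_erase_of_mem (Finset.mem_univ _), Finset.card_univ, Fintype.card_fin]
    have : 2 * k + 1 - 1 = 2 * k := by omega
    rw [this]; push_cast; ring
  -- Laplacian at v1, v2 for arbitrary functions
  have hne02 : (⟨0, by omega⟩ : Fin (2 * k + 1)) ≠ ⟨2, by omega⟩ := by simp [Fin.ext_iff]
  have hne01 : (⟨0, by omega⟩ : Fin (2 * k + 1)) ≠ ⟨1, by omega⟩ := by simp [Fin.ext_iff]
  have hL1 : ∀ F : Fin (2 * k + 1) → ℝ,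
      nLap (friendship k) F v1 = ((F v0 - F v1) + (F v2 - F v1)) / 2 := by
    intro F
    rw [nLap, hdeg1, nbr1 k hk, Finset.sum_pair hne02]
  have hL2 : ∀ F : Fin (2 * k + 1) → ℝ,
      nLap (friendship k) F v2 = ((F v0 - F v2) + (F v1 - F v2)) / 2 := by
    intro F
    rw [nLap, hdeg2, nbr2 k hk, Finset.sum_pair hne01]
  -- Laplacian at v0 for functions of the form `fun v => g v.val`
  have hL0 : ∀ g : ℕ → ℝ, (∀ i, 3 ≤ i → g i = g 3) →
      nLap (friendship k) (fun v => g v.val) v0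
        = (g 1 + g 2 + (2 * K - 2) * g 3 - 2 * K * g 0) / (2 * K) := by
    intro g hg
    rw [nLap, hdeg0, nbr0 k hk, Finset.sum_erase_eq_sub (Finset.mem_univ _)]
    have e : ∑ y : Fin (2 * k + 1), ((fun v => g v.val) y - (fun v => g v.val) v0)
        = (g 0 - g 0) + (g 1 - g 0) + (g 2 - g 0) + (2 * K - 2) * (g 3 - g 0) := by
      exact sum_univ_fin k hk (fun i => g i - g 0)
        (fun i hi => by show g i - g 0 = g 3 - g 0; rw [hg i hi])
    rw [e]
    have hv : g (v0 : Fin (2 * k + 1)).val = g 0 := rfl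
    have hv' : g ((⟨0, by omega⟩ : Fin (2 * k + 1)) : Fin (2 * k + 1)).val = g 0 := rfl
    rw [hv, hv']
    congr 1
    ring
  -- Laplacian values of f
  have hLf1 : nLap (friendship k) f v1 = 7 := by
    rw [hL1 f, hval0, hval1, hval2]; norm_num
  have hLf2 : nLap (friendship k) f v2 = 11 / 2 := by
    rw [hL2 f, hval0, hval1, hval2]; norm_num
  have hLf0 : nLap (friendship k) f v0 = (26 * K - 51) / (2 * K) := by
    have := hL0 h hhc
    rw [← hf] at this
    rw [this]
    simp only [hh0, hh1, hh2, hh3]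
    congr 1; ring
  -- Laplacian values of f * f
  have hffval0 : (f * f) v0 = 169 := by simp [Pi.mul_apply, hval0]; norm_num
  have hffval1 : (f * f) v1 = 0 := by simp [Pi.mul_apply, hval1]
  have hffval2 : (f * f) v2 = 1 := by simp [Pi.mul_apply, hval2]
  have hLff1 : nLap (friendship k) (f * f) v1 = 85 := by
    rw [hL1 (f * f), hffval0, hffval1, hffval2]; norm_num
  have hLff2 : nLap (friendship k) (f * f) v2 = 167 / 2 := by
    rw [hL2 (f * f), hffval0, hffval1, hffval2]; norm_num
  have hLff0 : nLap (friendship k) (f * f) v0 = (1014 * K - 1351) / (2 * K) := by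
    have hff : f * f = fun v => h v.val * h v.val := by
      funext v; simp [hf, Pi.mul_apply]
    have := hL0 (fun i => h i * h i)
      (fun i hi => by show h i * h i = h 3 * h 3; rw [hhc i hi])
    rw [← hff] at this
    rw [this]
    simp only [hh0, hh1, hh2, hh3]
    congr 1; ring
  -- Gamma values
  have hG1 : gam (nLap (friendship k)) f f v1 = 85 / 2 := by
    rw [gam, hLff1, hLf1, hval1]; norm_num
  have hG2 : gam (nLap (friendship k)) f f v2 = 145 / 4 := by
    rw [gam, hLff2, hLf2, hval2]; norm_num
  have hG0 : gam (nLap (friendship k)) f f v0 = (338 * K - 25) / (4 * K) := by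
    rw [gam, hLff0, hLf0, hval0]
    field_simp
    ring
  -- Laplacian of Gamma at v1
  have hLG : nLap (friendship k) (gam (nLap (friendship k)) f f) v1
      = (143 * K - 25) / (8 * K) := by
    rw [hL1 (gam (nLap (friendship k)) f f), hG0, hG1, hG2]
    field_simp
    ring
  -- Gamma(f, Lf) at v1
  have hmul0 : (f * nLap (friendship k) f) v0 = 13 * ((26 * K - 51) / (2 * K)) := by
    simp only [Pi.mul_apply, hval0, hLf0]
  have hmul1 : (f * nLap (friendship k) f) v1 = 0 := by
    simp only [Pi.mul_apply, hval1, zero_mul]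
  have hmul2 : (f * nLap (friendship k) f) v2 = 11 / 2 := by
    simp only [Pi.mul_apply, hval2, hLf2, one_mul]
  have hGfL : gam (nLap (friendship k)) f (nLap (friendship k) f) v1
      = (153 * K - 663) / (8 * K) := by
    rw [gam, hL1 (f * nLap (friendship k) f), hmul0, hmul1, hmul2, hval1, hLf1]
    field_simp
    ring
  have hmul0' : (nLap (friendship k) f * f) v0 = 13 * ((26 * K - 51) / (2 * K)) := by
    simp only [Pi.mul_apply, hval0, hLf0]; ring
  have hmul1' : (nLap (friendship k) f * f) v1 = 0 := by
    simp only [Pi.mul_apply, hval1, mul_zero]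
  have hmul2' : (nLap (friendship k) f * f) v2 = 11 / 2 := by
    simp only [Pi.mul_apply, hval2, hLf2, mul_one]
  have hGLf : gam (nLap (friendship k)) (nLap (friendship k) f) f v1
      = (153 * K - 663) / (8 * K) := by
    rw [gam, hL1 (nLap (friendship k) f * f), hmul0', hmul1', hmul2', hval1, hLf1]
    field_simp
    ring
  -- final computation
  rw [gam2, hLG, hGfL, hGLf]
  have hfinal : ((143 * K - 25) / (8 * K) - (153 * K - 663) / (8 * K)
      - (153 * K - 663) / (8 * K)) / 2 = (1301 - 163 * K) / (16 * K) := by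
    field_simp
    ring
  rw [hfinal]
  apply div_neg_of_neg_of_pos
  · linarith
  · linarith
end
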